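/- arXiv:2201.02060 — 3 statements merged into one kernel-verified Lean document; each statement's English description precedes it below -/
import Mathlib

section
/- If f is a proper colouring of a finite graph G with list assignment L whose colour set is C = ⋃_v L(v), and f uses only colours from C, then there exists a surjective proper colouring g : V(G) → C such that for every vertex v, either g(v) ∈ L(v) or g(v) = f(v), provided |C| ≤ |V(G)| and there is a system of distinct representatives φ : C → V(G) with c ∈ L(φ(c)). -/
/-!
Among the admissible colourings (proper, with colours in `C`, and agreeing at every vertex
with either the list or `f`), of which `f` is one, choose one minimising the number of colours `c` that are not
displayed at their representative `φ c`. If a colour `c` were missing, recolouring `φ c`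
with `c` would keep the colouring admissible, since a missing colour conflicts with no
neighbour, and would repair `c` without spoiling any other representative, since `φ` is
injective. So the minimiser is onto `C`.
-/

open Finset

section Recolouring

variable {V α : Type*}

theorem SimpleGraph.update_ne_of_adj_of_forall_ne [DecidableEq V] {G : SimpleGraph V}
    {g : V → α} (hg : ∀ u v, G.Adj u v → g u ≠ g v) {x : V} {c : α} (hc : ∀ v, g v ≠ c) :
    ∀ u v, G.Adj u v → Function.update g x c u ≠ Function.update g x c v := by
  intro u v huv
  rcases eq_or_ne u x with rfl | hu <;> rcases eq_or_ne v u with rfl | hvu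
  · exact absurd rfl (G.ne_of_adj huv)
  · simpa [Function.update_of_ne hvu] using (hc v).symm
  · exact absurd rfl (G.ne_of_adj huv)
  · rcases eq_or_ne v x with rfl | hvx
    · simpa [Function.update_of_ne hu] using hc u
    · simpa [Function.update_of_ne hu, Function.update_of_ne hvx] using hg u v huv

variable [Fintype V] [DecidableEq α]

structure IsAdmissibleColouring (G : SimpleGraph V) (L : V → Finset α) (f g : V → α) : Prop where
  adj_ne : ∀ u v, G.Adj u v → g u ≠ g v
  mem_biUnion : ∀ v, g v ∈ univ.biUnion L
  mem_or_eq : ∀ v, g v ∈ L v ∨ g v = f v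

theorem IsAdmissibleColouring.update [DecidableEq V] {G : SimpleGraph V} {L : V → Finset α}
    {f g : V → α} (hg : IsAdmissibleColouring G L f g) {x : V} {c : α} (hcx : c ∈ L x)
    (hc : ∀ v, g v ≠ c) : IsAdmissibleColouring G L f (Function.update g x c) where
  adj_ne := SimpleGraph.update_ne_of_adj_of_forall_ne hg.adj_ne hc
  mem_biUnion v := by
    rcases eq_or_ne v x with rfl | hv
    · simpa using ⟨v, hcx⟩
    · simpa [Function.update_of_ne hv] using hg.mem_biUnion v
  mem_or_eq v := by
    rcases eq_or_ne v x with rfl | hv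
    · simpa using Or.inl hcx
    · simpa [Function.update_of_ne hv] using hg.mem_or_eq v

end Recolouring

section Mismatches

variable {ι V α : Type*} [Fintype ι] [DecidableEq α]

def mismatches (φ : ι → V) (κ : ι → α) (g : V → α) : Finset ι :=
  univ.filter fun i => g (φ i) ≠ κ i

theorem card_mismatches_update_lt [DecidableEq ι] [DecidableEq V] {φ : ι → V}
    (hφ : φ.Injective) (κ : ι → α) {g : V → α} {i : ι} (hi : g (φ i) ≠ κ i) :
    (mismatches φ κ (Function.update g (φ i) (κ i))).card < (mismatches φ κ g).card := by
  have hsub : mismatches φ κ (Function.update g (φ i) (κ i)) ⊆ (mismatches φ κ g).erase i := by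
    intro j hj
    simp only [mismatches, mem_filter, mem_univ, true_and] at hj
    rcases eq_or_ne j i with rfl | hji
    · simp at hj
    · rw [Function.update_of_ne (hφ.ne hji)] at hj
      simpa [mismatches, hji] using hj
  have hmem : i ∈ mismatches φ κ g := by simpa [mismatches] using hi
  exact (card_le_card hsub).trans_lt (card_erase_lt_of_mem hmem)

end Mismatches

theorem stmt_3_general {V : Type*} [Fintype V] (G : SimpleGraph V)
    (L : V → Finset ℕ) (f : V → ℕ)
    (hf : ∀ u v, G.Adj u v → f u ≠ f v)
    (hfC : ∀ v, f v ∈ univ.biUnion L)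
    (φ : {c : ℕ // c ∈ univ.biUnion L} → V)
    (hφinj : Function.Injective φ)
    (hφ : ∀ c : {c : ℕ // c ∈ univ.biUnion L}, (c : ℕ) ∈ L (φ c)) :
    ∃ g : V → ℕ, (∀ u v, G.Adj u v → g u ≠ g v) ∧
      (∀ c ∈ univ.biUnion L, ∃ v, g v = c) ∧
      (∀ v, g v ∈ univ.biUnion L) ∧
      ∀ v, g v ∈ L v ∨ g v = f v := by
  classical
  have hf_adm : IsAdmissibleColouring G L f f := ⟨hf, hfC, fun _ => Or.inr rfl⟩
  obtain ⟨g, hg, hmin⟩ := (measure fun g => (mismatches φ Subtype.val g).card).wf.has_min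
    {g | IsAdmissibleColouring G L f g} ⟨f, hf_adm⟩
  refine ⟨g, hg.adj_ne, fun c hc => ?_, hg.mem_biUnion, hg.mem_or_eq⟩
  by_contra! hmissing
  exact hmin _ (hg.update (hφ ⟨c, hc⟩) hmissing)
    (card_mismatches_update_lt hφinj Subtype.val (hmissing _))

/-- If `f` is a proper colouring of `G` using only colours of `C = ⋃ v, L v`,
`|C| ≤ |V|`, and there is a system of distinct representatives `φ : C → V` with
`c ∈ L (φ c)`, then there is a surjective (onto `C`) proper colouring `g` such that
for each vertex `v`, either `g v ∈ L v` or `g v = f v`. -/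
theorem stmt_3 {V : Type*} [Fintype V] [DecidableEq V] (G : SimpleGraph V)
    (L : V → Finset ℕ) (f : V → ℕ)
    (hf : ∀ u v, G.Adj u v → f u ≠ f v)
    (hfC : ∀ v, f v ∈ univ.biUnion L)
    (hcard : (univ.biUnion L).card ≤ Fintype.card V)
    (φ : {c : ℕ // c ∈ univ.biUnion L} → V)
    (hφinj : Function.Injective φ)
    (hφ : ∀ c : {c : ℕ // c ∈ univ.biUnion L}, (c : ℕ) ∈ L (φ c)) :
    ∃ g : V → ℕ, (∀ u v, G.Adj u v → g u ≠ g v) ∧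
      (∀ c ∈ univ.biUnion L, ∃ v, g v = c) ∧
      (∀ v, g v ∈ univ.biUnion L) ∧
      ∀ v, g v ∈ L v ∨ g v = f v :=
  stmt_3_general G L f hf hfC φ hφinj hφ
end

section
/- Let G = K_{5, 2⋆(k−2), 1} be the complete k-partite graph with one part of size 5, k−2 parts of size 2, and one singleton part. If L is a k-list assignment of G such that some 3-subset S₁ of the 5-part has a colour common to all three of its lists, then G is L-colourable. -/
open Finset

lemma exists_injOn_finset {α β : Type*} [DecidableEq α] [DecidableEq β] [Nonempty β]
    (s : Finset α) (t : Finset β) (h : s.card ≤ t.card) :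
    ∃ f : α → β, (∀ a ∈ s, f a ∈ t) ∧ Set.InjOn f ↑s := by
  classical
  set e1 := s.equivFin
  set e2 := t.equivFin
  refine ⟨fun a => if ha : a ∈ s then (e2.symm (Fin.castLE h (e1 ⟨a, ha⟩))).1 else Classical.arbitrary β, ?_, ?_⟩
  · intro a ha
    simp only [dif_pos ha]
    exact (e2.symm _).2
  · intro a ha b hb hab
    simp only [Finset.mem_coe] at ha hb
    simp only [dif_pos ha, dif_pos hb] at hab
    have := Subtype.ext hab
    have h2 := e2.symm.injective this
    have h3 := Fin.castLE_injective h h2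
    have h4 := e1.injective h3
    exact congrArg Subtype.val h4

lemma card_union_of_ne {s t : Finset ℕ} (h : s ≠ t) {a : ℕ} (hs : a ≤ s.card) (ht : a ≤ t.card) :
    a + 1 ≤ (s ∪ t).card := by
  by_cases hst : s ⊆ t
  · have : ¬ t ⊆ s := fun h2 => h (subset_antisymm hst h2)
    obtain ⟨z, hz, hzs⟩ := not_subset.mp this
    have : insert z s ⊆ s ∪ t := by
      intro w hw; rcases Finset.mem_insert.mp hw with rfl | hw
      · exact Finset.mem_union_right _ hz
      · exact Finset.mem_union_left _ hw
    calc a + 1 ≤ (insert z s).card := by rw [Finset.card_insert_of_notMem hzs]; omega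
    _ ≤ _ := Finset.card_le_card this
  · obtain ⟨z, hz, hzt⟩ := not_subset.mp hst
    have : insert z t ⊆ s ∪ t := by
      intro w hw; rcases Finset.mem_insert.mp hw with rfl | hw
      · exact Finset.mem_union_left _ hz
      · exact Finset.mem_union_right _ hw
    calc a + 1 ≤ (insert z t).card := by rw [Finset.card_insert_of_notMem hzt]; omega
    _ ≤ _ := Finset.card_le_card this

lemma double_count (G : Fin 5 → Finset ℕ) (T : Finset ℕ)
    (h : ∀ t ∈ T, ((univ : Finset (Fin 5)).filter (fun i => t ∈ G i)).card ≤ 2) :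
    ∑ i : Fin 5, (G i ∩ T).card ≤ 2 * T.card := by
  have key : ∀ i, (G i ∩ T).card = ∑ t ∈ T, if t ∈ G i then 1 else 0 := by
    intro i
    rw [Finset.inter_comm, ← Finset.filter_mem_eq_inter, Finset.card_filter]
  calc ∑ i : Fin 5, (G i ∩ T).card = ∑ i : Fin 5, ∑ t ∈ T, if t ∈ G i then 1 else 0 := by
        simp_rw [key]
    _ = ∑ t ∈ T, ∑ i : Fin 5, if t ∈ G i then 1 else 0 := Finset.sum_comm
    _ = ∑ t ∈ T, ((univ : Finset (Fin 5)).filter (fun i => t ∈ G i)).card := by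
        refine Finset.sum_congr rfl fun t _ => ?_
        rw [Finset.card_filter]
    _ ≤ ∑ t ∈ T, 2 := Finset.sum_le_sum (fun t ht => h t ht)
    _ = 2 * T.card := by rw [Finset.sum_const, smul_eq_mul, mul_comm]

abbrev SDRIdx (n r : ℕ) := (Fin n ⊕ Fin n) ⊕ (Fin r ⊕ Unit)

def collapse {n r : ℕ} : SDRIdx n r → Fin n ⊕ (Fin r ⊕ Unit)
  | .inl (.inl j) => .inl j
  | .inl (.inr j) => .inl j
  | .inr z => .inr z

lemma nofull_card_bound {n r : ℕ} (X : Finset (SDRIdx n r))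
    (h1 : ∀ j : Fin n, ¬(Sum.inl (Sum.inl j) ∈ X ∧ Sum.inl (Sum.inr j) ∈ X))
    (J : Finset (Fin n)) (S : Finset (Fin r ⊕ Unit))
    (hJ : ∀ j, Sum.inl (Sum.inl j) ∈ X → j ∈ J) (hJ' : ∀ j, Sum.inl (Sum.inr j) ∈ X → j ∈ J)
    (hS : ∀ z, Sum.inr z ∈ X → z ∈ S) :
    X.card ≤ J.card + S.card := by
  classical
  have hinj : Set.InjOn (collapse (n := n) (r := r)) ↑X := by
    intro u hu v hv huv
    rw [Finset.mem_coe] at hu hv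
    match u, v with
    | .inl (.inl a), .inl (.inl b) => simp only [collapse, Sum.inl.injEq] at huv; rw [huv]
    | .inl (.inr a), .inl (.inr b) => simp only [collapse, Sum.inl.injEq] at huv; rw [huv]
    | .inl (.inl a), .inl (.inr b) =>
      simp only [collapse, Sum.inl.injEq] at huv
      subst huv; exact absurd ⟨hu, hv⟩ (h1 a)
    | .inl (.inr a), .inl (.inl b) =>
      simp only [collapse, Sum.inl.injEq] at huv
      subst huv; exact absurd ⟨hv, hu⟩ (h1 a)
    | .inr a, .inr b => simp only [collapse, Sum.inr.injEq] at huv; rw [huv]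
    | .inl a, .inr b => simp only [collapse] at huv; cases a <;> simp_all
    | .inr a, .inl b => simp only [collapse] at huv; cases b <;> simp_all
  have hmap : ∀ a ∈ X, collapse a ∈ (J.image Sum.inl ∪ S.image Sum.inr : Finset (Fin n ⊕ (Fin r ⊕ Unit))) := by
    intro a ha
    match a with
    | .inl (.inl j) => exact Finset.mem_union_left _ (Finset.mem_image_of_mem _ (hJ j ha))
    | .inl (.inr j) => exact Finset.mem_union_left _ (Finset.mem_image_of_mem _ (hJ' j ha))
    | .inr z => exact Finset.mem_union_right _ (Finset.mem_image_of_mem _ (hS z ha))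
  calc X.card ≤ (J.image Sum.inl ∪ S.image Sum.inr).card :=
        Finset.card_le_card_of_injOn collapse hmap hinj
  _ ≤ (J.image Sum.inl).card + (S.image Sum.inr).card := Finset.card_union_le _ _
  _ ≤ J.card + S.card := by
      gcongr <;> [exact Finset.card_image_le; exact Finset.card_image_le]

/-- generic Hall-based SDR lemma -/
lemma sdr {n r : ℕ} (A B : Fin n → Finset ℕ) (W : Finset ℕ) (E : Fin r → Finset ℕ)
    (hA : ∀ j, n ≤ (A j).card) (hB : ∀ j, n ≤ (B j).card)
    (hd : ∀ j, Disjoint (A j) (B j))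
    (hU : ∀ j, 2*n+1+r ≤ (A j).card + (B j).card)
    (hW : n+1 ≤ W.card) (hE : ∀ i, n+1+r ≤ (E i).card) :
    ∃ f : SDRIdx n r → ℕ, Function.Injective f ∧
      (∀ j, f (.inl (.inl j)) ∈ A j) ∧ (∀ j, f (.inl (.inr j)) ∈ B j) ∧
      (∀ i, f (.inr (.inl i)) ∈ E i) ∧ f (.inr (.inr ())) ∈ W := by
  classical
  set t : SDRIdx n r → Finset ℕ := Sum.elim (Sum.elim A B) (Sum.elim E (fun _ => W)) with ht
  have hall : ∀ X : Finset (SDRIdx n r), X.card ≤ (X.biUnion t).card := by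
    intro X
    by_cases h1 : ∃ j, (Sum.inl (Sum.inl j) ∈ X ∧ Sum.inl (Sum.inr j) ∈ X)
    · obtain ⟨j, hj1, hj2⟩ := h1
      have hsub : A j ∪ B j ⊆ X.biUnion t := by
        apply Finset.union_subset
        · exact Finset.subset_biUnion_of_mem t hj1
        · exact Finset.subset_biUnion_of_mem t hj2
      have h2 : 2*n+1+r ≤ (X.biUnion t).card := by
        calc 2*n+1+r ≤ (A j).card + (B j).card := hU j
        _ = (A j ∪ B j).card := (Finset.card_union_of_disjoint (hd j)).symm
        _ ≤ _ := Finset.card_le_card hsub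
      have h3 : X.card ≤ 2*n+r+1 := by
        calc X.card ≤ Fintype.card (SDRIdx n r) := Finset.card_le_univ X
        _ = 2*n+r+1 := by simp [SDRIdx]; omega
      omega
    · push_neg at h1
      have h1' : ∀ j : Fin n, ¬(Sum.inl (Sum.inl j) ∈ X ∧ Sum.inl (Sum.inr j) ∈ X) :=
        fun j h => h1 j h.1 h.2
      by_cases h2 : ∃ i, Sum.inr (Sum.inl i) ∈ X
      · obtain ⟨i, hi⟩ := h2
        have hXcard : X.card ≤ n + (r + 1) :=
          le_trans (nofull_card_bound X h1' univ univ (fun _ _ => mem_univ _)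
            (fun _ _ => mem_univ _) (fun _ _ => mem_univ _)) (by simp)
        have hEsub : E i ⊆ X.biUnion t := Finset.subset_biUnion_of_mem t hi
        have := Finset.card_le_card hEsub
        have := hE i
        omega
      · push_neg at h2
        by_cases h3 : Sum.inr (Sum.inr ()) ∈ X
        · have hWsub : W ⊆ X.biUnion t := Finset.subset_biUnion_of_mem t h3
          have hXc2 : X.card ≤ n + 1 := by
            have := nofull_card_bound X h1' univ {Sum.inr ()} (fun _ _ => mem_univ _)
              (fun _ _ => mem_univ _) (fun z hz => by
                match z with
                | .inl i => exact absurd hz (h2 i)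
                | .inr u => simp)
            simpa using this
          have := Finset.card_le_card hWsub
          omega
        · rcases Finset.eq_empty_or_nonempty X with rfl | ⟨z, hz⟩
          · simp
          · have hXc3 : X.card ≤ n := by
              have := nofull_card_bound X h1' univ ∅ (fun _ _ => mem_univ _)
                (fun _ _ => mem_univ _) (fun z hz => by
                  match z with
                  | .inl i => exact absurd hz (h2 i)
                  | .inr u => cases u; exact absurd hz h3)
              simpa using this
            match z, hz with
            | Sum.inl (Sum.inl j), hz =>
              have hsub : A j ⊆ X.biUnion t := Finset.subset_biUnion_of_mem t hz
              have := Finset.card_le_card hsub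
              have := hA j; omega
            | Sum.inl (Sum.inr j), hz =>
              have hsub : B j ⊆ X.biUnion t := Finset.subset_biUnion_of_mem t hz
              have := Finset.card_le_card hsub
              have := hB j; omega
            | Sum.inr (Sum.inl i), hz => exact absurd hz (h2 i)
            | Sum.inr (Sum.inr u), hz => cases u; exact absurd hz h3
  obtain ⟨f, hinj, hmem⟩ := (Finset.all_card_le_biUnion_card_iff_exists_injective t).mp hall
  exact ⟨f, hinj, fun j => hmem _, fun j => hmem _, fun i => hmem _, hmem _⟩

lemma reassemble (m : ℕ) (j₀ : Fin (m+1)) (A B : Fin (m+1) → Finset ℕ) (W : Finset ℕ)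
    (F : Fin 5 → Finset ℕ) (γ : ℕ) (hγA : γ ∈ A j₀) (hγB : γ ∈ B j₀)
    (x' y' : Fin m → ℕ) (ω : ℕ) (g : Fin 5 → ℕ)
    (hx' : ∀ i, x' i ∈ A (j₀.succAbove i) \ {γ}) (hy' : ∀ i, y' i ∈ B (j₀.succAbove i) \ {γ})
    (hω : ω ∈ W \ {γ}) (hg : ∀ i, g i ∈ F i \ {γ})
    (hpd : ∀ i i', i ≠ i' → x' i ≠ x' i' ∧ x' i ≠ y' i' ∧ y' i ≠ y' i')
    (hωd : ∀ i, ω ≠ x' i ∧ ω ≠ y' i) (hgd : ∀ i i', g i ≠ x' i' ∧ g i ≠ y' i')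
    (hgω : ∀ i, g i ≠ ω) :
    ∃ x y : Fin (m+1) → ℕ, ∃ ω' : ℕ, ∃ g' : Fin 5 → ℕ,
      (∀ j, x j ∈ A j) ∧ (∀ j, y j ∈ B j) ∧ ω' ∈ W ∧ (∀ i, g' i ∈ F i) ∧
      (∀ j j', j ≠ j' → x j ≠ x j' ∧ x j ≠ y j' ∧ y j ≠ y j') ∧
      (∀ j, ω' ≠ x j ∧ ω' ≠ y j) ∧ (∀ i j, g' i ≠ x j ∧ g' i ≠ y j) ∧ (∀ i, g' i ≠ ω') := by
  classical
  have hx'A : ∀ i, x' i ∈ A (j₀.succAbove i) := fun i => (Finset.mem_sdiff.mp (hx' i)).1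
  have hx'γ : ∀ i, x' i ≠ γ := fun i => by
    have := (Finset.mem_sdiff.mp (hx' i)).2; simpa using this
  have hy'B : ∀ i, y' i ∈ B (j₀.succAbove i) := fun i => (Finset.mem_sdiff.mp (hy' i)).1
  have hy'γ : ∀ i, y' i ≠ γ := fun i => by
    have := (Finset.mem_sdiff.mp (hy' i)).2; simpa using this
  refine ⟨j₀.insertNth γ x', j₀.insertNth γ y', ω, g, ?_, ?_, ?_, ?_, ?_, ?_, ?_, ?_⟩
  · intro j
    rcases eq_or_ne j j₀ with rfl | hne
    · rw [Fin.insertNth_apply_same]; exact hγA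
    · obtain ⟨i, rfl⟩ := Fin.exists_succAbove_eq hne
      rw [Fin.insertNth_apply_succAbove]; exact hx'A i
  · intro j
    rcases eq_or_ne j j₀ with rfl | hne
    · rw [Fin.insertNth_apply_same]; exact hγB
    · obtain ⟨i, rfl⟩ := Fin.exists_succAbove_eq hne
      rw [Fin.insertNth_apply_succAbove]; exact hy'B i
  · exact (Finset.mem_sdiff.mp hω).1
  · exact fun i => (Finset.mem_sdiff.mp (hg i)).1
  · intro j j' hjj'
    rcases eq_or_ne j j₀ with rfl | hne
    · obtain ⟨i', rfl⟩ := Fin.exists_succAbove_eq hjj'.symm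
      simp only [Fin.insertNth_apply_same, Fin.insertNth_apply_succAbove]
      exact ⟨fun h => hx'γ i' h.symm, fun h => hy'γ i' h.symm, fun h => hy'γ i' h.symm⟩
    · obtain ⟨i, rfl⟩ := Fin.exists_succAbove_eq hne
      rcases eq_or_ne j' j₀ with rfl | hne'
      · simp only [Fin.insertNth_apply_same, Fin.insertNth_apply_succAbove]
        exact ⟨hx'γ i, hx'γ i, hy'γ i⟩
      · obtain ⟨i', rfl⟩ := Fin.exists_succAbove_eq hne'
        simp only [Fin.insertNth_apply_succAbove]
        have hii' : i ≠ i' := fun h => hjj' (by rw [h])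
        exact hpd i i' hii'
  · intro j
    rcases eq_or_ne j j₀ with rfl | hne
    · simp only [Fin.insertNth_apply_same]
      have := (Finset.mem_sdiff.mp hω).2
      have hωγ : ω ≠ γ := by simpa using this
      exact ⟨hωγ, hωγ⟩
    · obtain ⟨i, rfl⟩ := Fin.exists_succAbove_eq hne
      simp only [Fin.insertNth_apply_succAbove]; exact hωd i
  · intro i j
    rcases eq_or_ne j j₀ with rfl | hne
    · simp only [Fin.insertNth_apply_same]
      have := (Finset.mem_sdiff.mp (hg i)).2
      have hgγ : g i ≠ γ := by simpa using this
      exact ⟨hgγ, hgγ⟩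
    · obtain ⟨i', rfl⟩ := Fin.exists_succAbove_eq hne
      simp only [Fin.insertNth_apply_succAbove]; exact hgd i i'
  · exact hgω

theorem master : ∀ (n : ℕ) (A B : Fin n → Finset ℕ) (W : Finset ℕ) (F : Fin 5 → Finset ℕ)
    (c : ℕ) (Tc : Finset (Fin 5)),
    (∀ j, n + 2 ≤ (A j).card) → (∀ j, n + 2 ≤ (B j).card) → n + 2 ≤ W.card →
    (∀ i, n + 2 ≤ (F i).card) → 3 ≤ Tc.card → (∀ i ∈ Tc, c ∈ F i) →
    ∃ x y : Fin n → ℕ, ∃ ω : ℕ, ∃ g : Fin 5 → ℕ,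
      (∀ j, x j ∈ A j) ∧ (∀ j, y j ∈ B j) ∧ ω ∈ W ∧ (∀ i, g i ∈ F i) ∧
      (∀ j j', j ≠ j' → x j ≠ x j' ∧ x j ≠ y j' ∧ y j ≠ y j') ∧
      (∀ j, ω ≠ x j ∧ ω ≠ y j) ∧ (∀ i j, g i ≠ x j ∧ g i ≠ y j) ∧ (∀ i, g i ≠ ω) := by
  intro n
  induction n using Nat.strong_induction_on with
  | _ n IH =>
  intro A B W F c Tc hA hB hW hF hTc hcT
  classical
  by_cases hmerge : ∃ j γ, γ ≠ c ∧ γ ∈ A j ∧ γ ∈ B j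
  · -- Case 1 : merge a pair on a non-c common colour, recurse
    obtain ⟨j₀, γ, hγc, hγA, hγB⟩ := hmerge
    obtain ⟨m, rfl⟩ : ∃ m, n = m + 1 := ⟨n - 1, by have := j₀.pos; omega⟩
    obtain ⟨x', y', ω, g, hx', hy', hω, hg, hpd, hωd, hgd, hgω⟩ :=
      IH m (by omega) (fun i => A (j₀.succAbove i) \ {γ}) (fun i => B (j₀.succAbove i) \ {γ})
        (W \ {γ}) (fun i => F i \ {γ}) c Tc
        (fun i => by have := hA (j₀.succAbove i); have := Finset.le_card_sdiff {γ} (A (j₀.succAbove i)); simp at this ⊢; omega)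
        (fun i => by have := hB (j₀.succAbove i); have := Finset.le_card_sdiff {γ} (B (j₀.succAbove i)); simp at this ⊢; omega)
        (by have := Finset.le_card_sdiff {γ} W; simp at this; omega)
        (fun i => by have := hF i; have := Finset.le_card_sdiff {γ} (F i); simp at this ⊢; omega)
        hTc
        (fun i hi => Finset.mem_sdiff.mpr ⟨hcT i hi, by simp; exact fun h => hγc h.symm⟩)
    exact reassemble m j₀ A B W F γ hγA hγB x' y' ω g hx' hy' hω hg hpd hωd
      (fun i i' => hgd i i') hgω
  · push_neg at hmerge
    -- now every common colour of a pair is c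
    have hABd : ∀ j, Disjoint (A j \ {c}) (B j \ {c}) := by
      intro j
      rw [Finset.disjoint_left]
      intro z hzA hzB
      rw [Finset.mem_sdiff] at hzA hzB
      have : z ≠ c := by simpa using hzA.2
      exact (hmerge j z this hzA.1) hzB.1
    obtain ⟨T', hT'sub, hT'card⟩ := Finset.exists_subset_card_eq hTc
    have hcT' : ∀ i ∈ T', c ∈ F i := fun i hi => hcT i (hT'sub hi)
    have hcompl : ((univ : Finset (Fin 5)) \ T').card = 2 := by
      rw [Finset.card_sdiff_of_subset (Finset.subset_univ _)]
      simp [hT'card]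
    obtain ⟨i4, i5, hne45, hC⟩ := Finset.card_eq_two.mp hcompl
    have hi4 : i4 ∉ T' := by
      have : i4 ∈ (univ : Finset (Fin 5)) \ T' := by rw [hC]; simp
      exact (Finset.mem_sdiff.mp this).2
    have hi5 : i5 ∉ T' := by
      have : i5 ∈ (univ : Finset (Fin 5)) \ T' := by rw [hC]; simp
      exact (Finset.mem_sdiff.mp this).2
    have hmemT' : ∀ i, i ∉ T' → i = i4 ∨ i = i5 := by
      intro i hi
      have : i ∈ (univ : Finset (Fin 5)) \ T' := Finset.mem_sdiff.mpr ⟨Finset.mem_univ _, hi⟩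
      rw [hC] at this; simpa using this
    -- basic c-less sets
    have hA' : ∀ j, n + 1 ≤ (A j \ {c}).card := fun j => by
      have := hA j; have := Finset.le_card_sdiff {c} (A j); simp at this; omega
    have hB' : ∀ j, n + 1 ≤ (B j \ {c}).card := fun j => by
      have := hB j; have := Finset.le_card_sdiff {c} (B j); simp at this; omega
    have hW' : n + 1 ≤ (W \ {c}).card := by
      have := Finset.le_card_sdiff {c} W; simp at this; omega
    have hcA' : ∀ j, c ∉ A j \ {c} := fun j => by simp
    have hcB' : ∀ j, c ∉ B j \ {c} := fun j => by simp
    have hcW' : c ∉ W \ {c} := by simp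
    -- the one-extra case (Case 3), as a reusable fact
    have key3 : ∀ j4 j5 : Fin 5, j5 ∉ T' → (∀ i, i ∉ T' → i = j4 ∨ i = j5) →
        c ∈ F j5 →
        ∃ x y : Fin n → ℕ, ∃ ω : ℕ, ∃ g : Fin 5 → ℕ,
          (∀ j, x j ∈ A j) ∧ (∀ j, y j ∈ B j) ∧ ω ∈ W ∧ (∀ i, g i ∈ F i) ∧
          (∀ j j', j ≠ j' → x j ≠ x j' ∧ x j ≠ y j' ∧ y j ≠ y j') ∧
          (∀ j, ω ≠ x j ∧ ω ≠ y j) ∧ (∀ i j, g i ≠ x j ∧ g i ≠ y j) ∧ (∀ i, g i ≠ ω) := by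
      intro j4 j5 hj5 hmem' hcj5
      obtain ⟨f, hinj, hfA, hfB, hfE, hfW⟩ := sdr (r := 1)
        (fun j => A j \ {c}) (fun j => B j \ {c}) (W \ {c}) ![F j4]
        (fun j => by show n ≤ (A j \ {c}).card; have := hA' j; omega)
        (fun j => by show n ≤ (B j \ {c}).card; have := hB' j; omega)
        hABd
        (fun j => by show 2*n+1+1 ≤ (A j \ {c}).card + (B j \ {c}).card; have := hA' j; have := hB' j; omega)
        hW'
        (fun i => by
          have h0 : (0 : Fin 1) = i := Subsingleton.elim _ _
          rw [← h0]; show n + 1 + 1 ≤ (F j4).card; have := hF j4; omega)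
      refine ⟨fun j => f (.inl (.inl j)), fun j => f (.inl (.inr j)), f (.inr (.inr ())),
        fun i => if i = j4 then f (.inr (.inl 0)) else c, ?_, ?_, ?_, ?_, ?_, ?_, ?_, ?_⟩
      · exact fun j => (Finset.mem_sdiff.mp (hfA j)).1
      · exact fun j => (Finset.mem_sdiff.mp (hfB j)).1
      · exact (Finset.mem_sdiff.mp hfW).1
      · intro i
        by_cases hij4 : i = j4
        · subst hij4; simp only [if_pos rfl]
          have := hfE 0; simpa using this
        · simp only [if_neg hij4]
          by_cases hiT : i ∈ T'
          · exact hcT' i hiT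
          · rcases hmem' i hiT with h | h
            · exact absurd h hij4
            · subst h; exact hcj5
      · intro j j' hjj'
        refine ⟨fun h2 => hjj' ?_, fun h2 => ?_, fun h2 => hjj' ?_⟩
        · have := hinj h2; simpa using this
        · have := hinj h2; simp at this
        · have := hinj h2; simpa using this
      · intro j
        constructor <;> (intro h2; have := hinj h2; simp at this)
      · intro i j
        by_cases hij4 : i = j4
        · simp only [if_pos hij4]
          constructor <;> (intro h2; have := hinj h2; simp at this)
        · simp only [if_neg hij4]
          refine ⟨fun h2 => (hcA' j) (h2 ▸ hfA j), fun h2 => (hcB' j) (h2 ▸ hfB j)⟩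
      · intro i
        by_cases hij4 : i = j4
        · simp only [if_pos hij4]
          intro h2; have := hinj h2; simp at this
        · simp only [if_neg hij4]
          intro h2; exact hcW' (h2 ▸ hfW)
    by_cases h4 : c ∈ F i4 <;> by_cases h5 : c ∈ F i5
    · -- Case 2 : c in all five lists
      have hallc : ∀ i, c ∈ F i := by
        intro i
        by_cases hiT : i ∈ T'
        · exact hcT' i hiT
        · rcases hmemT' i hiT with h | h
          · subst h; exact h4
          · subst h; exact h5
      obtain ⟨f, hinj, hfA, hfB, hfE, hfW⟩ := sdr (r := 0)
        (fun j => A j \ {c}) (fun j => B j \ {c}) (W \ {c}) (fun i => i.elim0)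
        (fun j => by show n ≤ (A j \ {c}).card; have := hA' j; omega)
        (fun j => by show n ≤ (B j \ {c}).card; have := hB' j; omega)
        hABd
        (fun j => by show 2*n+1+0 ≤ (A j \ {c}).card + (B j \ {c}).card; have := hA' j; have := hB' j; omega)
        hW'
        (fun i => i.elim0)
      refine ⟨fun j => f (.inl (.inl j)), fun j => f (.inl (.inr j)), f (.inr (.inr ())),
        fun _ => c, ?_, ?_, ?_, ?_, ?_, ?_, ?_, ?_⟩
      · exact fun j => (Finset.mem_sdiff.mp (hfA j)).1
      · exact fun j => (Finset.mem_sdiff.mp (hfB j)).1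
      · exact (Finset.mem_sdiff.mp hfW).1
      · exact fun i => hallc i
      · intro j j' hjj'
        refine ⟨fun h2 => hjj' ?_, fun h2 => ?_, fun h2 => hjj' ?_⟩
        · have := hinj h2; simpa using this
        · have := hinj h2; simp at this
        · have := hinj h2; simpa using this
      · intro j
        constructor <;> (intro h2; have := hinj h2; simp at this)
      · intro i j
        show c ≠ f (Sum.inl (Sum.inl j)) ∧ c ≠ f (Sum.inl (Sum.inr j))
        refine ⟨fun h2 => (hcA' j) (h2 ▸ hfA j), fun h2 => (hcB' j) (h2 ▸ hfB j)⟩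
      · intro i
        show c ≠ f (Sum.inr (Sum.inr ()))
        intro h2
        exact hcW' (h2 ▸ hfW)
    · -- Case 3a : c ∈ F i4, c ∉ F i5
      exact key3 i5 i4 hi4 (fun i hi => (hmemT' i hi).symm) h4
    · -- Case 3b : c ∉ F i4, c ∈ F i5
      exact key3 i4 i5 hi5 hmemT' h5
    · -- Case 4 : c in neither F i4 nor F i5
      have hG : ∀ i, n + 1 ≤ (F i \ {c}).card := fun i => by
        have := hF i; have := Finset.le_card_sdiff {c} (F i); simp at this; omega
      have hG4 : F i4 \ {c} = F i4 := by simp [h4]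
      have hG5 : F i5 \ {c} = F i5 := by simp [h5]
      by_cases hDD : F i4 = F i5
      · -- Case 4a : the two c-free lists are equal
        obtain ⟨γ, hγ4, hWγ⟩ : ∃ γ, γ ∈ F i4 ∧ n + 1 ≤ ((W \ {c}) \ {γ}).card := by
          by_cases hw : n + 2 ≤ (W \ {c}).card
          · have hne : (F i4).Nonempty := Finset.card_pos.mp (by have := hF i4; omega)
            obtain ⟨γ, hγ⟩ := hne
            refine ⟨γ, hγ, ?_⟩
            have := Finset.le_card_sdiff {γ} (W \ {c}); simp at this; omega
          · have h1 : ¬ F i4 ⊆ W \ {c} := by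
              intro hsub; have := Finset.card_le_card hsub; have := hF i4; omega
            obtain ⟨γ, hγ4, hγW⟩ := Finset.not_subset.mp h1
            have heq : (W \ {c}) \ {γ} = W \ {c} := by simp [hγW]
            exact ⟨γ, hγ4, by rw [heq]; omega⟩
        obtain ⟨f, hinj, hfA, hfB, hfE, hfW⟩ := sdr (r := 0)
          (fun j => (A j \ {c}) \ {γ}) (fun j => (B j \ {c}) \ {γ}) ((W \ {c}) \ {γ})
          (fun i => i.elim0)
          (fun j => by
            show n ≤ ((A j \ {c}) \ {γ}).card
            have := hA' j; have := Finset.le_card_sdiff {γ} (A j \ {c}); simp at this; omega)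
          (fun j => by
            show n ≤ ((B j \ {c}) \ {γ}).card
            have := hB' j; have := Finset.le_card_sdiff {γ} (B j \ {c}); simp at this; omega)
          (fun j => Disjoint.mono (Finset.sdiff_subset) (Finset.sdiff_subset) (hABd j))
          (fun j => by
            show 2*n+1+0 ≤ ((A j \ {c}) \ {γ}).card + ((B j \ {c}) \ {γ}).card
            by_cases hγA : γ ∈ A j \ {c}
            · have hγB : γ ∉ B j \ {c} := Finset.disjoint_left.mp (hABd j) hγA
              have e1 : (B j \ {c}) \ {γ} = B j \ {c} := by simp [hγB]
              have := hA' j; have := hB' j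
              have := Finset.le_card_sdiff {γ} (A j \ {c}); simp at this
              rw [e1]; omega
            · have e1 : (A j \ {c}) \ {γ} = A j \ {c} := by simp [hγA]
              have := hA' j; have := hB' j
              have := Finset.le_card_sdiff {γ} (B j \ {c}); simp at this
              rw [e1]; omega)
          hWγ
          (fun i => i.elim0)
        refine ⟨fun j => f (.inl (.inl j)), fun j => f (.inl (.inr j)), f (.inr (.inr ())),
          fun i => if i ∈ T' then c else γ, ?_, ?_, ?_, ?_, ?_, ?_, ?_, ?_⟩
        · exact fun j => (Finset.mem_sdiff.mp (Finset.mem_sdiff.mp (hfA j)).1).1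
        · exact fun j => (Finset.mem_sdiff.mp (Finset.mem_sdiff.mp (hfB j)).1).1
        · exact (Finset.mem_sdiff.mp (Finset.mem_sdiff.mp hfW).1).1
        · intro i
          by_cases hiT : i ∈ T'
          · simp only [if_pos hiT]; exact hcT' i hiT
          · simp only [if_neg hiT]
            rcases hmemT' i hiT with h | h
            · subst h; exact hγ4
            · subst h; exact hDD ▸ hγ4
        · intro j j' hjj'
          refine ⟨fun h2 => hjj' ?_, fun h2 => ?_, fun h2 => hjj' ?_⟩
          · have := hinj h2; simpa using this
          · have := hinj h2; simp at this
          · have := hinj h2; simpa using this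
        · intro j
          constructor <;> (intro h2; have := hinj h2; simp at this)
        · intro i j
          by_cases hiT : i ∈ T'
          · simp only [if_pos hiT]
            have h1 := Finset.mem_sdiff.mp (Finset.mem_sdiff.mp (hfA j)).1
            have h2 := Finset.mem_sdiff.mp (Finset.mem_sdiff.mp (hfB j)).1
            have e1 : f (.inl (.inl j)) ≠ c := by simpa using h1.2
            have e2 : f (.inl (.inr j)) ≠ c := by simpa using h2.2
            exact ⟨fun h => e1 h.symm, fun h => e2 h.symm⟩
          · simp only [if_neg hiT]
            have h1 := Finset.mem_sdiff.mp (hfA j)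
            have h2 := Finset.mem_sdiff.mp (hfB j)
            have e1 : f (.inl (.inl j)) ≠ γ := by simpa using h1.2
            have e2 : f (.inl (.inr j)) ≠ γ := by simpa using h2.2
            exact ⟨fun h => e1 h.symm, fun h => e2 h.symm⟩
        · intro i
          by_cases hiT : i ∈ T'
          · simp only [if_pos hiT]
            have h1 := Finset.mem_sdiff.mp (Finset.mem_sdiff.mp hfW).1
            intro h2; exact absurd h2.symm (by simpa using h1.2)
          · simp only [if_neg hiT]
            have h1 := Finset.mem_sdiff.mp hfW
            intro h2; exact absurd h2.symm (by simpa using h1.2)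
      · -- Case 4b : F i4 ≠ F i5
        have hF45 : n + 3 ≤ (F i4 ∪ F i5).card := by
          have := card_union_of_ne hDD (hF i4) (hF i5); omega
        set t1 : SDRIdx n 2 → Finset ℕ :=
          Sum.elim (Sum.elim (fun j => A j \ {c}) (fun j => B j \ {c}))
            (Sum.elim ![F i4, F i5] (fun _ => W \ {c})) with ht1
        have hval0 : t1 (Sum.inr (Sum.inl 0)) = F i4 := by rw [ht1]; simp
        have hval1 : t1 (Sum.inr (Sum.inl 1)) = F i5 := by rw [ht1]; simp
        have hvalw : t1 (Sum.inr (Sum.inr ())) = W \ {c} := by rw [ht1]; simp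
        have hvalA : ∀ j, t1 (Sum.inl (Sum.inl j)) = A j \ {c} := fun j => by rw [ht1]; simp
        have hvalB : ∀ j, t1 (Sum.inl (Sum.inr j)) = B j \ {c} := fun j => by rw [ht1]; simp
        by_cases hH1 : ∀ X : Finset (SDRIdx n 2), X.card ≤ (X.biUnion t1).card
        · -- Hall succeeds : colour S with c, everything else distinctly
          obtain ⟨f, hinj, hmem⟩ := (Finset.all_card_le_biUnion_card_iff_exists_injective t1).mp hH1
          have hfA : ∀ j, f (.inl (.inl j)) ∈ A j \ {c} := fun j => (hvalA j) ▸ hmem _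
          have hfB : ∀ j, f (.inl (.inr j)) ∈ B j \ {c} := fun j => (hvalB j) ▸ hmem _
          have hfW : f (.inr (.inr ())) ∈ W \ {c} := hvalw ▸ hmem _
          have hf4 : f (.inr (.inl 0)) ∈ F i4 := hval0 ▸ hmem _
          have hf5 : f (.inr (.inl 1)) ∈ F i5 := hval1 ▸ hmem _
          refine ⟨fun j => f (.inl (.inl j)), fun j => f (.inl (.inr j)), f (.inr (.inr ())),
            fun i => if i ∈ T' then c else if i = i4 then f (.inr (.inl 0)) else f (.inr (.inl 1)),
            ?_, ?_, ?_, ?_, ?_, ?_, ?_, ?_⟩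
          · exact fun j => (Finset.mem_sdiff.mp (hfA j)).1
          · exact fun j => (Finset.mem_sdiff.mp (hfB j)).1
          · exact (Finset.mem_sdiff.mp hfW).1
          · intro i
            by_cases hiT : i ∈ T'
            · simp only [if_pos hiT]; exact hcT' i hiT
            · simp only [if_neg hiT]
              rcases hmemT' i hiT with h | h
              · subst h; simp only [if_pos rfl]; exact hf4
              · subst h
                have : i ≠ i4 := fun h => hne45 h.symm
                simp only [if_neg this]; exact hf5
          · intro j j' hjj'
            refine ⟨fun h2 => hjj' ?_, fun h2 => ?_, fun h2 => hjj' ?_⟩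
            · have := hinj h2; simpa using this
            · have := hinj h2; simp at this
            · have := hinj h2; simpa using this
          · intro j
            constructor <;> (intro h2; have := hinj h2; simp at this)
          · intro i j
            by_cases hiT : i ∈ T'
            · simp only [if_pos hiT]
              have e1 : f (.inl (.inl j)) ≠ c := by simpa using (Finset.mem_sdiff.mp (hfA j)).2
              have e2 : f (.inl (.inr j)) ≠ c := by simpa using (Finset.mem_sdiff.mp (hfB j)).2
              exact ⟨fun h => e1 h.symm, fun h => e2 h.symm⟩
            · simp only [if_neg hiT]
              by_cases hii4 : i = i4
              · simp only [if_pos hii4]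
                constructor <;> (intro h2; have := hinj h2; simp at this)
              · simp only [if_neg hii4]
                constructor <;> (intro h2; have := hinj h2; simp at this)
          · intro i
            by_cases hiT : i ∈ T'
            · simp only [if_pos hiT]
              intro h2; exact absurd h2.symm (by simpa using (Finset.mem_sdiff.mp hfW).2)
            · simp only [if_neg hiT]
              by_cases hii4 : i = i4
              · simp only [if_pos hii4]
                intro h2; have := hinj h2; simp at this
              · simp only [if_neg hii4]
                intro h2; have := hinj h2; simp at this
        · -- Hall fails : extract the rigid structure
          push_neg at hH1
          obtain ⟨X, hX⟩ := hH1
          have hcard_pair : ∀ j, 2*n+2 ≤ ((A j \ {c}) ∪ (B j \ {c})).card := by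
            intro j
            rw [Finset.card_union_of_disjoint (hABd j)]
            have := hA' j; have := hB' j; omega
          have hfull : ∃ j, Sum.inl (Sum.inl j) ∈ X ∧ Sum.inl (Sum.inr j) ∈ X := by
            by_contra hnf
            push_neg at hnf
            have h1' : ∀ j : Fin n, ¬(Sum.inl (Sum.inl j) ∈ X ∧ Sum.inl (Sum.inr j) ∈ X) :=
              fun j h => hnf j h.1 h.2
            have hhall : X.card ≤ (X.biUnion t1).card := by
              by_cases hE4 : Sum.inr (Sum.inl (0 : Fin 2)) ∈ X
              · by_cases hE5 : Sum.inr (Sum.inl (1 : Fin 2)) ∈ X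
                · have hXc := nofull_card_bound X h1' univ univ (fun _ _ => mem_univ _)
                    (fun _ _ => mem_univ _) (fun _ _ => mem_univ _)
                  simp only [Finset.card_univ, Fintype.card_fin, Fintype.card_sum,
                    Fintype.card_unit] at hXc
                  have hsub : F i4 ∪ F i5 ⊆ X.biUnion t1 := by
                    apply Finset.union_subset
                    · exact hval0 ▸ Finset.subset_biUnion_of_mem t1 hE4
                    · exact hval1 ▸ Finset.subset_biUnion_of_mem t1 hE5
                  have := Finset.card_le_card hsub
                  omega
                · have hXc := nofull_card_bound X h1' univ (univ.erase (Sum.inl 1))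
                    (fun _ _ => mem_univ _) (fun _ _ => mem_univ _) (fun z hz => by
                      refine Finset.mem_erase.mpr ⟨?_, mem_univ _⟩
                      rintro rfl; exact hE5 hz)
                  have hcle : (univ.erase (Sum.inl (1:Fin 2) : Fin 2 ⊕ Unit)).card = 2 := by
                    rw [Finset.card_erase_of_mem (mem_univ _)]
                    simp
                  rw [hcle] at hXc
                  simp only [Finset.card_univ, Fintype.card_fin] at hXc
                  have hsub : F i4 ⊆ X.biUnion t1 := hval0 ▸ Finset.subset_biUnion_of_mem t1 hE4
                  have := Finset.card_le_card hsub
                  have := hF i4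
                  omega
              · by_cases hE5 : Sum.inr (Sum.inl (1 : Fin 2)) ∈ X
                · have hXc := nofull_card_bound X h1' univ (univ.erase (Sum.inl 0))
                    (fun _ _ => mem_univ _) (fun _ _ => mem_univ _) (fun z hz => by
                      refine Finset.mem_erase.mpr ⟨?_, mem_univ _⟩
                      rintro rfl; exact hE4 hz)
                  have hcle : (univ.erase (Sum.inl (0:Fin 2) : Fin 2 ⊕ Unit)).card = 2 := by
                    rw [Finset.card_erase_of_mem (mem_univ _)]
                    simp
                  rw [hcle] at hXc
                  simp only [Finset.card_univ, Fintype.card_fin] at hXc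
                  have hsub : F i5 ⊆ X.biUnion t1 := hval1 ▸ Finset.subset_biUnion_of_mem t1 hE5
                  have := Finset.card_le_card hsub
                  have := hF i5
                  omega
                · by_cases hw : Sum.inr (Sum.inr ()) ∈ X
                  · have hXc := nofull_card_bound X h1' univ {Sum.inr ()}
                      (fun _ _ => mem_univ _) (fun _ _ => mem_univ _) (fun z hz => by
                        match z with
                        | .inl i =>
                          exfalso
                          match i with
                          | 0 => exact hE4 hz
                          | 1 => exact hE5 hz
                        | .inr u => simp)
                    simp only [Finset.card_univ, Fintype.card_fin, Finset.card_singleton] at hXc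
                    have hsub : W \ {c} ⊆ X.biUnion t1 := hvalw ▸ Finset.subset_biUnion_of_mem t1 hw
                    have := Finset.card_le_card hsub
                    omega
                  · rcases Finset.eq_empty_or_nonempty X with rfl | ⟨z, hz⟩
                    · simp
                    · have hXc := nofull_card_bound X h1' univ ∅
                        (fun _ _ => mem_univ _) (fun _ _ => mem_univ _) (fun z hz => by
                          match z with
                          | .inl i =>
                            exfalso
                            match i with
                            | 0 => exact hE4 hz
                            | 1 => exact hE5 hz
                          | .inr u => exact absurd hz (by cases u; exact hw))
                      simp only [Finset.card_univ, Fintype.card_fin, Finset.card_empty] at hXc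
                      match z, hz with
                      | Sum.inl (Sum.inl j), hz =>
                        have hsub : A j \ {c} ⊆ X.biUnion t1 :=
                          (hvalA j) ▸ Finset.subset_biUnion_of_mem t1 hz
                        have := Finset.card_le_card hsub
                        have := hA' j
                        omega
                      | Sum.inl (Sum.inr j), hz =>
                        have hsub : B j \ {c} ⊆ X.biUnion t1 :=
                          (hvalB j) ▸ Finset.subset_biUnion_of_mem t1 hz
                        have := Finset.card_le_card hsub
                        have := hB' j
                        omega
                      | Sum.inr (Sum.inl i), hz =>
                        exfalso
                        match i with
                        | 0 => exact hE4 hz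
                        | 1 => exact hE5 hz
                      | Sum.inr (Sum.inr u), hz => cases u; exact absurd hz hw
            omega
          obtain ⟨j₀, hj₀x, hj₀y⟩ := hfull
          have hnpos : 0 < n := j₀.pos
          have hXuniv : X = univ := by
            apply Finset.eq_univ_of_card
            have hsub : (A j₀ \ {c}) ∪ (B j₀ \ {c}) ⊆ X.biUnion t1 := by
              apply Finset.union_subset
              · exact (hvalA j₀) ▸ Finset.subset_biUnion_of_mem t1 hj₀x
              · exact (hvalB j₀) ▸ Finset.subset_biUnion_of_mem t1 hj₀y
            have h1 := le_trans (hcard_pair j₀) (Finset.card_le_card hsub)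
            have h2 : X.card ≤ Fintype.card (SDRIdx n 2) := Finset.card_le_univ X
            have h3 : Fintype.card (SDRIdx n 2) = 2*n+3 := by simp [SDRIdx]; omega
            omega
          subst hXuniv
          have hunivcard : (univ : Finset (SDRIdx n 2)).card = 2*n+3 := by
            rw [Finset.card_univ]; simp [SDRIdx]; omega
          have hTcard_le : ((univ : Finset (SDRIdx n 2)).biUnion t1).card ≤ 2*n+2 := by omega
          have hTsub : ∀ z, t1 z ⊆ (univ : Finset (SDRIdx n 2)).biUnion t1 :=
            fun z => Finset.subset_biUnion_of_mem t1 (mem_univ z)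
          have hpart : ∀ j, (A j \ {c}) ∪ (B j \ {c}) = (univ : Finset (SDRIdx n 2)).biUnion t1 := by
            intro j
            apply Finset.eq_of_subset_of_card_le
            · apply Finset.union_subset
              · exact (hvalA j) ▸ hTsub (Sum.inl (Sum.inl j))
              · exact (hvalB j) ▸ hTsub (Sum.inl (Sum.inr j))
            · exact le_trans hTcard_le (hcard_pair j)
          set T : Finset ℕ := (univ : Finset (SDRIdx n 2)).biUnion t1 with hTdef
          have hTcard : T.card = 2*n+2 := by
            have h1 := hpart j₀
            have h2 := hcard_pair j₀
            rw [h1] at h2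
            omega
          have hA'card : ∀ j, (A j \ {c}).card = n+1 := by
            intro j
            have h1 := hpart j
            have h2 := Finset.card_union_of_disjoint (hABd j)
            rw [h1, hTcard] at h2
            have := hA' j; have := hB' j; omega
          have hB'card : ∀ j, (B j \ {c}).card = n+1 := by
            intro j
            have h1 := hpart j
            have h2 := Finset.card_union_of_disjoint (hABd j)
            rw [h1, hTcard] at h2
            have := hA' j; have := hB' j; omega
          have hcA : ∀ j, c ∈ A j := by
            intro j; by_contra hc
            have heq : A j \ {c} = A j := by simp [hc]
            have := hA'card j; rw [heq] at this; have := hA j; omega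
          have hcB : ∀ j, c ∈ B j := by
            intro j; by_contra hc
            have heq : B j \ {c} = B j := by simp [hc]
            have := hB'card j; rw [heq] at this; have := hB j; omega
          have hF4T : F i4 ⊆ T := hval0 ▸ hTsub (Sum.inr (Sum.inl 0))
          have hF5T : F i5 ⊆ T := hval1 ▸ hTsub (Sum.inr (Sum.inl 1))
          have hWT : W \ {c} ⊆ T := hvalw ▸ hTsub (Sum.inr (Sum.inr ()))
          have hcT'' : c ∉ T := by
            rw [← hpart j₀]; simp
          by_cases h3com : ∃ c', 3 ≤ ((univ : Finset (Fin 5)).filter (fun i => c' ∈ F i \ {c})).card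
          · -- some colour lies in three of the five c-free lists : recurse
            obtain ⟨c', hc'3⟩ := h3com
            obtain ⟨T'', hT''sub, hT''card⟩ := Finset.exists_subset_card_eq hc'3
            obtain ⟨m, rfl⟩ : ∃ m, n = m + 1 := ⟨n - 1, by omega⟩
            obtain ⟨x', y', ω, g, hx', hy', hω, hg, hpd, hωd, hgd, hgω⟩ :=
              IH m (by omega) (fun i => A (j₀.succAbove i) \ {c})
                (fun i => B (j₀.succAbove i) \ {c})
                (W \ {c}) (fun i => F i \ {c}) c' T''
                (fun i => by
                  show m + 2 ≤ (A (j₀.succAbove i) \ {c}).card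
                  have := hA'card (j₀.succAbove i); omega)
                (fun i => by
                  show m + 2 ≤ (B (j₀.succAbove i) \ {c}).card
                  have := hB'card (j₀.succAbove i); omega)
                (by have := hW'; omega)
                (fun i => by
                  show m + 2 ≤ (F i \ {c}).card
                  have := hG i; omega)
                (by rw [hT''card])
                (fun i hi => (Finset.mem_filter.mp (hT''sub hi)).2)
            exact reassemble m j₀ A B W F c (hcA j₀) (hcB j₀) x' y' ω g hx' hy' hω hg hpd hωd
              (fun i i' => hgd i i') hgω
          · -- no colour in three of the five lists : kernel analysis
            have hE0 : 2 ≤ (F i4 ∩ F i5).card := by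
              have h1 := Finset.card_union_add_card_inter (F i4) (F i5)
              have h2 : (F i4 ∪ F i5).card ≤ T.card :=
                Finset.card_le_card (Finset.union_subset hF4T hF5T)
              have := hF i4; have := hF i5; omega
            set t2 : SDRIdx n 1 → Finset ℕ :=
              Sum.elim (Sum.elim (fun j => A j \ {c}) (fun j => B j \ {c}))
                (Sum.elim ![F i4 ∩ F i5] (fun _ => W \ {c})) with ht2
            have hval20 : t2 (Sum.inr (Sum.inl 0)) = F i4 ∩ F i5 := by rw [ht2]; simp
            have hval2w : t2 (Sum.inr (Sum.inr ())) = W \ {c} := by rw [ht2]; simp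
            have hval2A : ∀ j, t2 (Sum.inl (Sum.inl j)) = A j \ {c} := fun j => by rw [ht2]; simp
            have hval2B : ∀ j, t2 (Sum.inl (Sum.inr j)) = B j \ {c} := fun j => by rw [ht2]; simp
            by_cases hH2 : ∀ X2 : Finset (SDRIdx n 1), X2.card ≤ (X2.biUnion t2).card
            · -- Hall succeeds with the merged (a,b)-vertex
              obtain ⟨f, hinj, hmem⟩ := (Finset.all_card_le_biUnion_card_iff_exists_injective t2).mp hH2
              have hfA : ∀ j, f (.inl (.inl j)) ∈ A j \ {c} := fun j => (hval2A j) ▸ hmem _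
              have hfB : ∀ j, f (.inl (.inr j)) ∈ B j \ {c} := fun j => (hval2B j) ▸ hmem _
              have hfW : f (.inr (.inr ())) ∈ W \ {c} := hval2w ▸ hmem _
              have hfE : f (.inr (.inl 0)) ∈ F i4 ∩ F i5 := hval20 ▸ hmem _
              refine ⟨fun j => f (.inl (.inl j)), fun j => f (.inl (.inr j)), f (.inr (.inr ())),
                fun i => if i ∈ T' then c else f (.inr (.inl 0)),
                ?_, ?_, ?_, ?_, ?_, ?_, ?_, ?_⟩
              · exact fun j => (Finset.mem_sdiff.mp (hfA j)).1
              · exact fun j => (Finset.mem_sdiff.mp (hfB j)).1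
              · exact (Finset.mem_sdiff.mp hfW).1
              · intro i
                by_cases hiT : i ∈ T'
                · simp only [if_pos hiT]; exact hcT' i hiT
                · simp only [if_neg hiT]
                  rcases hmemT' i hiT with h | h
                  · subst h; exact (Finset.mem_inter.mp hfE).1
                  · subst h; exact (Finset.mem_inter.mp hfE).2
              · intro j j' hjj'
                refine ⟨fun h2 => hjj' ?_, fun h2 => ?_, fun h2 => hjj' ?_⟩
                · have := hinj h2; simpa using this
                · have := hinj h2; simp at this
                · have := hinj h2; simpa using this
              · intro j
                constructor <;> (intro h2; have := hinj h2; simp at this)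
              · intro i j
                by_cases hiT : i ∈ T'
                · simp only [if_pos hiT]
                  have e1 : f (.inl (.inl j)) ≠ c := by simpa using (Finset.mem_sdiff.mp (hfA j)).2
                  have e2 : f (.inl (.inr j)) ≠ c := by simpa using (Finset.mem_sdiff.mp (hfB j)).2
                  exact ⟨fun h => e1 h.symm, fun h => e2 h.symm⟩
                · simp only [if_neg hiT]
                  constructor <;> (intro h2; have := hinj h2; simp at this)
              · intro i
                by_cases hiT : i ∈ T'
                · simp only [if_pos hiT]
                  intro h2; exact absurd h2.symm (by simpa using (Finset.mem_sdiff.mp hfW).2)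
                · simp only [if_neg hiT]
                  intro h2; have := hinj h2; simp at this
            · -- Hall fails once more : fully rigid kernel
              push_neg at hH2
              obtain ⟨X2, hX2⟩ := hH2
              have huniv2card : (univ : Finset (SDRIdx n 1)).card = 2*n+2 := by
                rw [Finset.card_univ]; simp [SDRIdx]; omega
              have hnofull2 : ∀ j, ¬(Sum.inl (Sum.inl j) ∈ X2 ∧ Sum.inl (Sum.inr j) ∈ X2) := by
                rintro j ⟨hx1, hx2⟩
                have hsub : (A j \ {c}) ∪ (B j \ {c}) ⊆ X2.biUnion t2 := by
                  apply Finset.union_subset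
                  · exact (hval2A j) ▸ Finset.subset_biUnion_of_mem t2 hx1
                  · exact (hval2B j) ▸ Finset.subset_biUnion_of_mem t2 hx2
                have h1 := Finset.card_le_card hsub
                have h2 := hcard_pair j
                have h3 : X2.card ≤ 2*n+2 := huniv2card ▸ Finset.card_le_univ X2
                omega
              have hEin : Sum.inr (Sum.inl (0 : Fin 1)) ∈ X2 := by
                by_contra hEn
                have hnoE : ∀ i : Fin 1, Sum.inr (Sum.inl i) ∉ X2 := by
                  intro i; have : i = 0 := Subsingleton.elim _ _; rw [this]; exact hEn
                have hhall : X2.card ≤ (X2.biUnion t2).card := by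
                  by_cases hw2 : Sum.inr (Sum.inr ()) ∈ X2
                  · have hXc := nofull_card_bound X2 hnofull2 univ {Sum.inr ()}
                      (fun _ _ => mem_univ _) (fun _ _ => mem_univ _) (fun z hz => by
                        match z with
                        | .inl i => exact absurd hz (hnoE i)
                        | .inr u => simp)
                    simp only [Finset.card_univ, Fintype.card_fin, Finset.card_singleton] at hXc
                    have hsub : W \ {c} ⊆ X2.biUnion t2 := hval2w ▸ Finset.subset_biUnion_of_mem t2 hw2
                    have := Finset.card_le_card hsub
                    omega
                  · rcases Finset.eq_empty_or_nonempty X2 with rfl | ⟨z, hz⟩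
                    · simp
                    · have hXc := nofull_card_bound X2 hnofull2 univ ∅
                        (fun _ _ => mem_univ _) (fun _ _ => mem_univ _) (fun z hz => by
                          match z with
                          | .inl i => exact absurd hz (hnoE i)
                          | .inr u => exact absurd hz (by cases u; exact hw2))
                      simp only [Finset.card_univ, Fintype.card_fin, Finset.card_empty] at hXc
                      match z, hz with
                      | Sum.inl (Sum.inl j), hz =>
                        have hsub : A j \ {c} ⊆ X2.biUnion t2 :=
                          (hval2A j) ▸ Finset.subset_biUnion_of_mem t2 hz
                        have := Finset.card_le_card hsub
                        have := hA' j
                        omega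
                      | Sum.inl (Sum.inr j), hz =>
                        have hsub : B j \ {c} ⊆ X2.biUnion t2 :=
                          (hval2B j) ▸ Finset.subset_biUnion_of_mem t2 hz
                        have := Finset.card_le_card hsub
                        have := hB' j
                        omega
                      | Sum.inr (Sum.inl i), hz => exact absurd hz (hnoE i)
                      | Sum.inr (Sum.inr u), hz => cases u; exact absurd hz hw2
                omega
              have hwin : Sum.inr (Sum.inr ()) ∈ X2 := by
                by_contra hwn
                have hhall : X2.card ≤ (X2.biUnion t2).card := by
                  by_cases hhalf : ∃ j, Sum.inl (Sum.inl j) ∈ X2 ∨ Sum.inl (Sum.inr j) ∈ X2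
                  · obtain ⟨j, hj⟩ := hhalf
                    have hXc := nofull_card_bound X2 hnofull2 univ {Sum.inl 0}
                      (fun _ _ => mem_univ _) (fun _ _ => mem_univ _) (fun z hz => by
                        match z with
                        | .inl i =>
                          have : i = 0 := Subsingleton.elim _ _
                          rw [this]; simp
                        | .inr u => exact absurd hz (by cases u; exact hwn))
                    simp only [Finset.card_univ, Fintype.card_fin, Finset.card_singleton] at hXc
                    rcases hj with hj | hj
                    · have hsub : A j \ {c} ⊆ X2.biUnion t2 :=
                        (hval2A j) ▸ Finset.subset_biUnion_of_mem t2 hj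
                      have := Finset.card_le_card hsub
                      have := hA' j
                      omega
                    · have hsub : B j \ {c} ⊆ X2.biUnion t2 :=
                        (hval2B j) ▸ Finset.subset_biUnion_of_mem t2 hj
                      have := Finset.card_le_card hsub
                      have := hB' j
                      omega
                  · push_neg at hhalf
                    have hXc := nofull_card_bound X2 hnofull2 ∅ {Sum.inl 0}
                      (fun j hj => absurd hj (hhalf j).1)
                      (fun j hj => absurd hj ((hhalf j).2))
                      (fun z hz => by
                        match z with
                        | .inl i =>
                          have : i = 0 := Subsingleton.elim _ _
                          rw [this]; simp
                        | .inr u => exact absurd hz (by cases u; exact hwn))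
                    simp only [Finset.card_empty, Finset.card_singleton] at hXc
                    have hsub : F i4 ∩ F i5 ⊆ X2.biUnion t2 :=
                      hval20 ▸ Finset.subset_biUnion_of_mem t2 hEin
                    have := Finset.card_le_card hsub
                    omega
                omega
              have hpairsin : ∀ j, Sum.inl (Sum.inl j) ∈ X2 ∨ Sum.inl (Sum.inr j) ∈ X2 := by
                intro j
                by_contra hj
                push_neg at hj
                have hXc := nofull_card_bound X2 hnofull2 (univ.erase j) univ
                  (fun j' hj' => Finset.mem_erase.mpr ⟨by rintro rfl; exact hj.1 hj', mem_univ _⟩)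
                  (fun j' hj' => Finset.mem_erase.mpr ⟨by rintro rfl; exact hj.2 hj', mem_univ _⟩)
                  (fun _ _ => mem_univ _)
                have hc1 : ((univ : Finset (Fin n)).erase j).card = n - 1 := by
                  rw [Finset.card_erase_of_mem (mem_univ _), Finset.card_univ]; simp
                have hc2 : (univ : Finset (Fin 1 ⊕ Unit)).card = 2 := by
                  rw [Finset.card_univ]; simp
                rw [hc1, hc2] at hXc
                have hsub : W \ {c} ⊆ X2.biUnion t2 := hval2w ▸ Finset.subset_biUnion_of_mem t2 hwin
                have := Finset.card_le_card hsub
                omega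
              have hXc2 : X2.card ≤ n + 2 := by
                have := nofull_card_bound X2 hnofull2 univ univ
                  (fun _ _ => mem_univ _) (fun _ _ => mem_univ _) (fun _ _ => mem_univ _)
                simp only [Finset.card_univ, Fintype.card_fin, Fintype.card_sum,
                  Fintype.card_unit] at this
                omega
              have hUle : (X2.biUnion t2).card ≤ n + 1 := by omega
              have hHeq : W \ {c} = X2.biUnion t2 := by
                apply Finset.eq_of_subset_of_card_le
                  (hval2w ▸ Finset.subset_biUnion_of_mem t2 hwin)
                omega
              have hWcard : (W \ {c}).card = n + 1 := by
                have := congrArg Finset.card hHeq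
                omega
              have hblock : ∀ j, A j \ {c} = W \ {c} ∨ B j \ {c} = W \ {c} := by
                intro j
                rcases hpairsin j with hin | hin
                · left
                  have hsub : A j \ {c} ⊆ X2.biUnion t2 :=
                    (hval2A j) ▸ Finset.subset_biUnion_of_mem t2 hin
                  rw [← hHeq] at hsub
                  exact (Finset.eq_of_subset_of_card_le hsub
                    (by rw [hWcard, hA'card j])).symm ▸ rfl
                · right
                  have hsub : B j \ {c} ⊆ X2.biUnion t2 :=
                    (hval2B j) ▸ Finset.subset_biUnion_of_mem t2 hin
                  rw [← hHeq] at hsub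
                  exact (Finset.eq_of_subset_of_card_le hsub
                    (by rw [hWcard, hB'card j])).symm ▸ rfl
              have hE0H : F i4 ∩ F i5 ⊆ W \ {c} := by
                rw [hHeq]
                exact hval20 ▸ Finset.subset_biUnion_of_mem t2 hEin
              -- ===== the rigid kernel =====
              set K : Finset ℕ := T \ (W \ {c}) with hKdef
              have hKcard : K.card = n + 1 := by
                rw [hKdef, Finset.card_sdiff_of_subset hWT, hTcard, hWcard]
                omega
              have hKT : K ⊆ T := by rw [hKdef]; exact Finset.sdiff_subset
              have hHKdisj : Disjoint (W \ {c}) K := by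
                rw [hKdef]; exact Finset.sdiff_disjoint.symm
              have hHK : (W \ {c}) ∪ K = T := by
                rw [hKdef]; exact Finset.union_sdiff_of_subset hWT
              have hHneK : W \ {c} ≠ K := by
                intro h
                obtain ⟨z, hz⟩ : (W \ {c}).Nonempty := Finset.card_pos.mp (by omega)
                exact Finset.disjoint_left.mp hHKdisj hz (h ▸ hz)
              have horient : ∀ j, (A j \ {c} = W \ {c} ∧ B j \ {c} = K) ∨
                  (A j \ {c} = K ∧ B j \ {c} = W \ {c}) := by
                intro j
                rcases hblock j with h | h
                · left
                  refine ⟨h, ?_⟩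
                  have hsubK : B j \ {c} ⊆ K := by
                    rw [hKdef]
                    intro z hz
                    refine Finset.mem_sdiff.mpr ⟨?_, ?_⟩
                    · rw [← hpart j]; exact Finset.mem_union_right _ hz
                    · rw [← h]; exact fun hzA => Finset.disjoint_left.mp (hABd j) hzA hz
                  exact Finset.eq_of_subset_of_card_le hsubK (by rw [hB'card j, hKcard])
                · right
                  refine ⟨?_, h⟩
                  have hsubK : A j \ {c} ⊆ K := by
                    rw [hKdef]
                    intro z hz
                    refine Finset.mem_sdiff.mpr ⟨?_, ?_⟩
                    · rw [← hpart j]; exact Finset.mem_union_left _ hz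
                    · rw [← h]; exact fun hzB => Finset.disjoint_left.mp (hABd j) hz hzB
                  exact Finset.eq_of_subset_of_card_le hsubK (by rw [hA'card j, hKcard])
              obtain ⟨hstar, hstarE⟩ : ∃ z, z ∈ F i4 ∩ F i5 := Finset.card_pos.mp (by omega)
              have hstarH : hstar ∈ W \ {c} := hE0H hstarE
              have hstar4 : hstar ∈ F i4 := (Finset.mem_inter.mp hstarE).1
              have hstar5 : hstar ∈ F i5 := (Finset.mem_inter.mp hstarE).2
              have hstarc : hstar ≠ c := by simpa using (Finset.mem_sdiff.mp hstarH).2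
              have htight : ∃ i ∈ T', ¬ (F i \ {c} ⊆ T) := by
                by_contra hall5
                push_neg at hall5
                have hno3' : ∀ z ∈ T,
                    ((univ : Finset (Fin 5)).filter (fun i => z ∈ F i \ {c})).card ≤ 2 := by
                  intro z _
                  by_contra hgt
                  push_neg at hgt
                  exact h3com ⟨z, hgt⟩
                have hsum : ∑ i : Fin 5, ((F i \ {c}) ∩ T).card ≤ 2 * T.card :=
                  double_count (fun i => F i \ {c}) T hno3'
                have hsplit : ∑ x ∈ ((univ : Finset (Fin 5)) \ T'), ((F x \ {c}) ∩ T).card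
                    + ∑ x ∈ T', ((F x \ {c}) ∩ T).card
                    = ∑ x : Fin 5, ((F x \ {c}) ∩ T).card :=
                  Finset.sum_sdiff (Finset.subset_univ T')
                rw [hC, Finset.sum_pair hne45] at hsplit
                have hi4eq : (F i4 \ {c}) ∩ T = F i4 := by
                  rw [hG4]; exact Finset.inter_eq_left.mpr hF4T
                have hi5eq : (F i5 \ {c}) ∩ T = F i5 := by
                  rw [hG5]; exact Finset.inter_eq_left.mpr hF5T
                rw [hi4eq, hi5eq] at hsplit
                have hsum3 : 3 * (n+1) ≤ ∑ i ∈ T', ((F i \ {c}) ∩ T).card := by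
                  have h9 : T'.card • (n+1) ≤ ∑ i ∈ T', ((F i \ {c}) ∩ T).card :=
                    Finset.card_nsmul_le_sum T' (fun i => ((F i \ {c}) ∩ T).card) (n+1)
                    (fun i hi => by
                      show n + 1 ≤ ((F i \ {c}) ∩ T).card
                      rw [Finset.inter_eq_left.mpr (hall5 i hi)]
                      exact hG i)
                  have h9' := hT'card ▸ h9
                  simpa [smul_eq_mul] using h9'
                have := hF i4; have := hF i5
                rw [hTcard] at hsum
                omega
              obtain ⟨iesc, hiescT, hiescNT⟩ := htight
              have hGKex : ∀ i, i ∈ T' → (F i \ {c} ⊆ T) → ((F i \ {c}) ∩ K).Nonempty := by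
                intro i hiT hsub
                have hdisjE : ∀ z ∈ F i \ {c}, z ∉ F i4 ∩ F i5 := by
                  intro z hz hzE
                  apply h3com
                  refine ⟨z, ?_⟩
                  have hine4 : i ≠ i4 := fun h => hi4 (h ▸ hiT)
                  have hine5 : i ≠ i5 := fun h => hi5 (h ▸ hiT)
                  have hsub3 : ({i, i4, i5} : Finset (Fin 5)) ⊆
                      (univ : Finset (Fin 5)).filter (fun i' => z ∈ F i' \ {c}) := by
                    intro w hw
                    simp only [Finset.mem_insert, Finset.mem_singleton] at hw
                    rcases hw with rfl | rfl | rfl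
                    · exact Finset.mem_filter.mpr ⟨mem_univ _, hz⟩
                    · refine Finset.mem_filter.mpr ⟨mem_univ _, ?_⟩
                      rw [hG4]; exact (Finset.mem_inter.mp hzE).1
                    · refine Finset.mem_filter.mpr ⟨mem_univ _, ?_⟩
                      rw [hG5]; exact (Finset.mem_inter.mp hzE).2
                  have hc3 : ({i, i4, i5} : Finset (Fin 5)).card = 3 := by
                    rw [Finset.card_insert_of_notMem (by simp [hine4, hine5]),
                      Finset.card_insert_of_notMem (by simp [hne45]), Finset.card_singleton]
                  calc (3:ℕ) = ({i, i4, i5} : Finset (Fin 5)).card := hc3.symm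
                  _ ≤ _ := Finset.card_le_card hsub3
                have h1 : (F i \ {c}) ∩ (W \ {c}) ⊆ (W \ {c}) \ (F i4 ∩ F i5) := by
                  intro z hz
                  exact Finset.mem_sdiff.mpr ⟨(Finset.mem_inter.mp hz).2,
                    hdisjE z (Finset.mem_inter.mp hz).1⟩
                have h2 : ((W \ {c}) \ (F i4 ∩ F i5)).card = n + 1 - (F i4 ∩ F i5).card := by
                  rw [Finset.card_sdiff_of_subset hE0H, hWcard]
                have h3 : (F i \ {c}) ⊆ ((F i \ {c}) ∩ (W \ {c})) ∪ ((F i \ {c}) ∩ K) := by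
                  intro z hz
                  have hzT := hsub hz
                  rw [← hHK] at hzT
                  rcases Finset.mem_union.mp hzT with h | h
                  · exact Finset.mem_union_left _ (Finset.mem_inter.mpr ⟨hz, h⟩)
                  · exact Finset.mem_union_right _ (Finset.mem_inter.mpr ⟨hz, h⟩)
                have h4 := Finset.card_le_card h3
                have h5 := Finset.card_union_le ((F i \ {c}) ∩ (W \ {c})) ((F i \ {c}) ∩ K)
                have h6 := Finset.card_le_card h1
                have h7 := hG i
                exact Finset.card_pos.mp (by omega)
              choose! κ hκ using hGKex
              set tights : Finset (Fin 5) := T'.filter (fun i => F i \ {c} ⊆ T) with htightsdef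
              set Q : Finset ℕ := tights.image κ with hQdef
              have hQcard : Q.card ≤ 2 := by
                have h1 : tights ⊆ T'.erase iesc := by
                  intro i hi
                  have h2 := Finset.mem_filter.mp hi
                  exact Finset.mem_erase.mpr ⟨by rintro rfl; exact hiescNT h2.2, h2.1⟩
                calc Q.card ≤ tights.card := Finset.card_image_le
                _ ≤ (T'.erase iesc).card := Finset.card_le_card h1
                _ = 2 := by rw [Finset.card_erase_of_mem hiescT, hT'card]
              obtain ⟨ω0, hω0⟩ : ((W \ {c}) \ {hstar}).Nonempty := by
                apply Finset.card_pos.mp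
                have h1 := Finset.le_card_sdiff {hstar} (W \ {c})
                rw [Finset.card_singleton] at h1
                omega
              have hω0W : ω0 ∈ W \ {c} := (Finset.mem_sdiff.mp hω0).1
              have hω0star : ω0 ≠ hstar := by simpa using (Finset.mem_sdiff.mp hω0).2
              obtain ⟨fH, hfHmem, hfHinj⟩ := exists_injOn_finset ((univ : Finset (Fin n)).erase j₀)
                (((W \ {c}) \ {hstar}).erase ω0) (by
                  have e1 : ((univ : Finset (Fin n)).erase j₀).card = n - 1 := by
                    rw [Finset.card_erase_of_mem (mem_univ _), Finset.card_univ]; simp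
                  have e2 : ((W \ {c}) \ {hstar}).card = n := by
                    rw [Finset.card_sdiff_of_subset (by simpa using hstarH), hWcard, Finset.card_singleton]
                    omega
                  have e3 : (((W \ {c}) \ {hstar}).erase ω0).card = n - 1 := by
                    rw [Finset.card_erase_of_mem hω0, e2]
                  rw [e1, e3])
              obtain ⟨fK, hfKmem, hfKinj⟩ := exists_injOn_finset ((univ : Finset (Fin n)).erase j₀)
                (K \ Q) (by
                  have e1 : ((univ : Finset (Fin n)).erase j₀).card = n - 1 := by
                    rw [Finset.card_erase_of_mem (mem_univ _), Finset.card_univ]; simp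
                  have := Finset.le_card_sdiff Q K
                  rw [e1]; omega)
              have hescx : ∀ i, i ∈ T' → ¬(F i \ {c} ⊆ T) → ((F i \ {c}) \ T).Nonempty := by
                intro i hi hn
                obtain ⟨z, hz1, hz2⟩ := Finset.not_subset.mp hn
                exact ⟨z, Finset.mem_sdiff.mpr ⟨hz1, hz2⟩⟩
              choose! esc hesc using hescx
              have hfH' : ∀ j : Fin n, j ≠ j₀ → fH j ∈ W \ {c} ∧ fH j ≠ hstar ∧ fH j ≠ ω0 := by
                intro j hj
                have h0 := hfHmem j (Finset.mem_erase.mpr ⟨hj, mem_univ _⟩)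
                have h1 := Finset.mem_erase.mp h0
                have h2 := Finset.mem_sdiff.mp h1.2
                exact ⟨h2.1, by simpa using h2.2, h1.1⟩
              have hfK' : ∀ j : Fin n, j ≠ j₀ → fK j ∈ K ∧ fK j ∉ Q := by
                intro j hj
                have h0 := hfKmem j (Finset.mem_erase.mpr ⟨hj, mem_univ _⟩)
                have h1 := Finset.mem_sdiff.mp h0
                exact ⟨h1.1, h1.2⟩
              -- value helpers
              have hxmem : ∀ j, j ≠ j₀ →
                  (if A j \ {c} = W \ {c} then fH j else fK j) ∈ A j \ {c} := by
                intro j hj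
                by_cases ho : A j \ {c} = W \ {c}
                · simp only [if_pos ho]; rw [ho]; exact (hfH' j hj).1
                · simp only [if_neg ho]
                  rcases horient j with ⟨h1, _⟩ | ⟨h1, _⟩
                  · exact absurd h1 ho
                  · rw [h1]; exact (hfK' j hj).1
              have hymem : ∀ j, j ≠ j₀ →
                  (if A j \ {c} = W \ {c} then fK j else fH j) ∈ B j \ {c} := by
                intro j hj
                by_cases ho : A j \ {c} = W \ {c}
                · simp only [if_pos ho]
                  rcases horient j with ⟨_, h2⟩ | ⟨h1, _⟩
                  · rw [h2]; exact (hfK' j hj).1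
                  · exact absurd (ho.symm.trans h1) hHneK
                · simp only [if_neg ho]
                  rcases horient j with ⟨h1, _⟩ | ⟨_, h2⟩
                  · exact absurd h1 ho
                  · rw [h2]; exact (hfH' j hj).1
              have huT : ∀ j, j ≠ j₀ →
                  (if A j \ {c} = W \ {c} then fH j else fK j) ∈ T := by
                intro j hj
                by_cases ho : A j \ {c} = W \ {c}
                · simp only [if_pos ho]; exact hWT (hfH' j hj).1
                · simp only [if_neg ho]; exact hKT (hfK' j hj).1
              have hvT : ∀ j, j ≠ j₀ →
                  (if A j \ {c} = W \ {c} then fK j else fH j) ∈ T := by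
                intro j hj
                by_cases ho : A j \ {c} = W \ {c}
                · simp only [if_pos ho]; exact hKT (hfK' j hj).1
                · simp only [if_neg ho]; exact hWT (hfH' j hj).1
              -- distinctness helpers
              have hfHfK : ∀ a b : Fin n, a ≠ j₀ → b ≠ j₀ → fH a ≠ fK b := by
                intro a b ha hb h
                exact Finset.disjoint_left.mp hHKdisj (hfH' a ha).1 (h ▸ (hfK' b hb).1)
              have hfHfH : ∀ a b : Fin n, a ≠ b → a ≠ j₀ → b ≠ j₀ → fH a ≠ fH b := by
                intro a b hab ha hb h
                exact hab (hfHinj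
                  (Finset.mem_coe.mpr (Finset.mem_erase.mpr ⟨ha, mem_univ _⟩))
                  (Finset.mem_coe.mpr (Finset.mem_erase.mpr ⟨hb, mem_univ _⟩)) h)
              have hfKfK : ∀ a b : Fin n, a ≠ b → a ≠ j₀ → b ≠ j₀ → fK a ≠ fK b := by
                intro a b hab ha hb h
                exact hab (hfKinj
                  (Finset.mem_coe.mpr (Finset.mem_erase.mpr ⟨ha, mem_univ _⟩))
                  (Finset.mem_coe.mpr (Finset.mem_erase.mpr ⟨hb, mem_univ _⟩)) h)
              have huv1 : ∀ a b : Fin n, a ≠ j₀ → b ≠ j₀ → a ≠ b →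
                  (if A a \ {c} = W \ {c} then fH a else fK a) ≠
                  (if A b \ {c} = W \ {c} then fH b else fK b) := by
                intro a b ha hb hab
                by_cases h1 : A a \ {c} = W \ {c} <;> by_cases h2 : A b \ {c} = W \ {c} <;>
                  simp only [if_pos, if_neg, h1, h2, ite_true, ite_false]
                · exact hfHfH a b hab ha hb
                · exact hfHfK a b ha hb
                · exact fun h => hfHfK b a hb ha h.symm
                · exact hfKfK a b hab ha hb
              have huv2 : ∀ a b : Fin n, a ≠ j₀ → b ≠ j₀ → a ≠ b →
                  (if A a \ {c} = W \ {c} then fH a else fK a) ≠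
                  (if A b \ {c} = W \ {c} then fK b else fH b) := by
                intro a b ha hb hab
                by_cases h1 : A a \ {c} = W \ {c} <;> by_cases h2 : A b \ {c} = W \ {c} <;>
                  simp only [if_pos, if_neg, h1, h2, ite_true, ite_false]
                · exact hfHfK a b ha hb
                · exact hfHfH a b hab ha hb
                · exact hfKfK a b hab ha hb
                · exact fun h => hfHfK b a hb ha h.symm
              have huv3 : ∀ a b : Fin n, a ≠ j₀ → b ≠ j₀ → a ≠ b →
                  (if A a \ {c} = W \ {c} then fK a else fH a) ≠
                  (if A b \ {c} = W \ {c} then fK b else fH b) := by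
                intro a b ha hb hab
                by_cases h1 : A a \ {c} = W \ {c} <;> by_cases h2 : A b \ {c} = W \ {c} <;>
                  simp only [if_pos, if_neg, h1, h2, ite_true, ite_false]
                · exact hfKfK a b hab ha hb
                · exact fun h => hfHfK b a hb ha h.symm
                · exact hfHfK a b ha hb
                · exact hfHfH a b hab ha hb
              have hω0u : ∀ j, j ≠ j₀ → ω0 ≠ (if A j \ {c} = W \ {c} then fH j else fK j) := by
                intro j hj
                by_cases ho : A j \ {c} = W \ {c} <;>
                  simp only [if_pos, if_neg, ho, ite_true, ite_false]
                · exact fun h => (hfH' j hj).2.2 h.symm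
                · exact fun h => Finset.disjoint_left.mp hHKdisj hω0W (h ▸ (hfK' j hj).1)
              have hω0v : ∀ j, j ≠ j₀ → ω0 ≠ (if A j \ {c} = W \ {c} then fK j else fH j) := by
                intro j hj
                by_cases ho : A j \ {c} = W \ {c} <;>
                  simp only [if_pos, if_neg, ho, ite_true, ite_false]
                · exact fun h => Finset.disjoint_left.mp hHKdisj hω0W (h ▸ (hfK' j hj).1)
                · exact fun h => (hfH' j hj).2.2 h.symm
              -- final witnesses
              refine ⟨fun j => if j = j₀ then c else (if A j \ {c} = W \ {c} then fH j else fK j),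
                fun j => if j = j₀ then c else (if A j \ {c} = W \ {c} then fK j else fH j),
                ω0,
                fun i => if i ∈ T' then (if F i \ {c} ⊆ T then κ i else esc i) else hstar,
                ?_, ?_, ?_, ?_, ?_, ?_, ?_, ?_⟩
              · intro j
                by_cases hj : j = j₀
                · simp only [if_pos hj]; rw [hj]; exact hcA j₀
                · simp only [if_neg hj]
                  exact (Finset.mem_sdiff.mp (hxmem j hj)).1
              · intro j
                by_cases hj : j = j₀
                · simp only [if_pos hj]; rw [hj]; exact hcB j₀
                · simp only [if_neg hj]
                  exact (Finset.mem_sdiff.mp (hymem j hj)).1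
              · exact (Finset.mem_sdiff.mp hω0W).1
              · intro i
                by_cases hiT : i ∈ T'
                · simp only [if_pos hiT]
                  by_cases hsub : F i \ {c} ⊆ T
                  · simp only [if_pos hsub]
                    have := (Finset.mem_inter.mp (hκ i hiT hsub)).1
                    exact (Finset.mem_sdiff.mp this).1
                  · simp only [if_neg hsub]
                    have := (Finset.mem_sdiff.mp (hesc i hiT hsub)).1
                    exact (Finset.mem_sdiff.mp this).1
                · simp only [if_neg hiT]
                  rcases hmemT' i hiT with h | h
                  · subst h; exact hstar4
                  · subst h; exact hstar5
              · intro j j' hjj'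
                by_cases h1 : j = j₀ <;> by_cases h2 : j' = j₀
                · exact absurd (h1.trans h2.symm) hjj'
                · simp only [if_pos h1, if_neg h2]
                  refine ⟨?_, ?_, ?_⟩
                  · exact fun h => hcT'' (by rw [h]; exact huT j' h2)
                  · exact fun h => hcT'' (by rw [h]; exact hvT j' h2)
                  · exact fun h => hcT'' (by rw [h]; exact hvT j' h2)
                · simp only [if_neg h1, if_pos h2]
                  refine ⟨?_, ?_, ?_⟩
                  · exact fun h => hcT'' (by rw [← h]; exact huT j h1)
                  · exact fun h => hcT'' (by rw [← h]; exact huT j h1)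
                  · exact fun h => hcT'' (by rw [← h]; exact hvT j h1)
                · simp only [if_neg h1, if_neg h2]
                  exact ⟨huv1 j j' h1 h2 hjj', huv2 j j' h1 h2 hjj', huv3 j j' h1 h2 hjj'⟩
              · intro j
                by_cases hj : j = j₀
                · simp only [if_pos hj]
                  have : ω0 ≠ c := fun h => hcT'' (by rw [← h]; exact hWT hω0W)
                  exact ⟨this, this⟩
                · simp only [if_neg hj]
                  exact ⟨hω0u j hj, hω0v j hj⟩
              · intro i j
                have hgfacts : (if i ∈ T' then (if F i \ {c} ⊆ T then κ i else esc i) else hstar) ≠ c ∧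
                    ∀ z, z ≠ j₀ → (if i ∈ T' then (if F i \ {c} ⊆ T then κ i else esc i) else hstar) ≠
                      (if A z \ {c} = W \ {c} then fH z else fK z) ∧
                      (if i ∈ T' then (if F i \ {c} ⊆ T then κ i else esc i) else hstar) ≠
                      (if A z \ {c} = W \ {c} then fK z else fH z) := by
                  by_cases hiT : i ∈ T'
                  · simp only [if_pos hiT]
                    by_cases hsub : F i \ {c} ⊆ T
                    · simp only [if_pos hsub]
                      have hκi := hκ i hiT hsub
                      have hκiF := (Finset.mem_inter.mp hκi).1
                      have hκiK := (Finset.mem_inter.mp hκi).2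
                      have hκic : κ i ≠ c := by
                        simpa using (Finset.mem_sdiff.mp hκiF).2
                      have hκiQ : κ i ∈ Q := by
                        rw [hQdef]
                        exact Finset.mem_image_of_mem κ
                          (Finset.mem_filter.mpr ⟨hiT, hsub⟩)
                      refine ⟨hκic, ?_⟩
                      intro z hz
                      constructor
                      · by_cases ho : A z \ {c} = W \ {c} <;>
                          simp only [if_pos, if_neg, ho, ite_true, ite_false]
                        · exact fun h => Finset.disjoint_left.mp hHKdisj (hfH' z hz).1 (h ▸ hκiK)
                        · exact fun h => (hfK' z hz).2 (h ▸ hκiQ)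
                      · by_cases ho : A z \ {c} = W \ {c} <;>
                          simp only [if_pos, if_neg, ho, ite_true, ite_false]
                        · exact fun h => (hfK' z hz).2 (h ▸ hκiQ)
                        · exact fun h => Finset.disjoint_left.mp hHKdisj (hfH' z hz).1 (h ▸ hκiK)
                    · simp only [if_neg hsub]
                      have hei := hesc i hiT hsub
                      have heiF := (Finset.mem_sdiff.mp hei).1
                      have heiT : esc i ∉ T := (Finset.mem_sdiff.mp hei).2
                      have heic : esc i ≠ c := by
                        simpa using (Finset.mem_sdiff.mp heiF).2
                      refine ⟨heic, ?_⟩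
                      intro z hz
                      exact ⟨fun h => heiT (by rw [h]; exact huT z hz),
                        fun h => heiT (by rw [h]; exact hvT z hz)⟩
                  · simp only [if_neg hiT]
                    refine ⟨hstarc, ?_⟩
                    intro z hz
                    constructor
                    · by_cases ho : A z \ {c} = W \ {c} <;>
                        simp only [if_pos, if_neg, ho, ite_true, ite_false]
                      · exact fun h => (hfH' z hz).2.1 h.symm
                      · exact fun h => Finset.disjoint_left.mp hHKdisj hstarH (h ▸ (hfK' z hz).1)
                    · by_cases ho : A z \ {c} = W \ {c} <;>
                        simp only [if_pos, if_neg, ho, ite_true, ite_false]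
                      · exact fun h => Finset.disjoint_left.mp hHKdisj hstarH (h ▸ (hfK' z hz).1)
                      · exact fun h => (hfH' z hz).2.1 h.symm
                by_cases hj : j = j₀
                · simp only [if_pos hj]
                  exact ⟨hgfacts.1, hgfacts.1⟩
                · simp only [if_neg hj]
                  exact hgfacts.2 j hj
              · intro i
                by_cases hiT : i ∈ T'
                · simp only [if_pos hiT]
                  by_cases hsub : F i \ {c} ⊆ T
                  · simp only [if_pos hsub]
                    have hκiK := (Finset.mem_inter.mp (hκ i hiT hsub)).2
                    exact fun h => Finset.disjoint_left.mp hHKdisj hω0W (h ▸ hκiK : ω0 ∈ K)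
                  · simp only [if_neg hsub]
                    have heiT : esc i ∉ T := (Finset.mem_sdiff.mp (hesc i hiT hsub)).2
                    exact fun h => heiT (by rw [h]; exact hWT hω0W)
                · simp only [if_neg hiT]
                  exact fun h => hω0star h.symm

set_option maxHeartbeats 1000000 in
/-- The complete `k`-partite graph `K_{5, 2⋆(k−2), 1}` is `L`-colourable for any
`k`-list assignment `L` whenever some 3-subset of the 5-part has a colour common
to all three of its lists. -/
theorem stmt_8 {V : Type*} [Fintype V] [DecidableEq V]
    (k : ℕ) (hk : 2 ≤ k) (p : V → Fin k) (hsurj : Function.Surjective p)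
    (hcard : Fintype.card V = 2 * k + 2)
    (i₀ i₁ : Fin k) (hne : i₀ ≠ i₁)
    (h5 : (univ.filter fun v => p v = i₀).card = 5)
    (h1 : (univ.filter fun v => p v = i₁).card = 1)
    (h2 : ∀ j, j ≠ i₀ → j ≠ i₁ → (univ.filter fun v => p v = j).card = 2)
    (L : V → Finset ℕ) (hL : ∀ v, k ≤ (L v).card)
    (S : Finset V) (hS : S ⊆ univ.filter fun v => p v = i₀) (hS3 : S.card = 3)
    (c : ℕ) (hc : ∀ v ∈ S, c ∈ L v) :
    ∃ f : V → ℕ, (∀ u v, p u ≠ p v → f u ≠ f v) ∧ ∀ v, f v ∈ L v := by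
  classical
  obtain ⟨s1, s2, s3, h12, h13, h23, hSeq⟩ := Finset.card_eq_three.mp hS3
  have hPS : ((univ.filter fun v => p v = i₀) \ S).card = 2 := by
    rw [Finset.card_sdiff_of_subset hS, h5, hS3]
  obtain ⟨av, bv, hab, hPSeq⟩ := Finset.card_eq_two.mp hPS
  obtain ⟨wv, hweq⟩ := Finset.card_eq_one.mp h1
  have hpair : ∀ j : Fin k, j ≠ i₀ → j ≠ i₁ → ∃ u v : V, u ≠ v ∧
      univ.filter (fun x => p x = j) = {u, v} :=
    fun j hj0 hj1 => Finset.card_eq_two.mp (h2 j hj0 hj1)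
  choose uu0 vv0 huv0 hupart0 using hpair
  have hnV : Nonempty V := by
    apply Fintype.card_pos_iff.mp
    omega
  set R : Finset (Fin k) := univ \ {i₀, i₁} with hR
  have hRmem : ∀ j, j ∈ R ↔ (j ≠ i₀ ∧ j ≠ i₁) := by
    intro j; rw [hR]; simp [not_or]
  set uu : Fin k → V := fun j =>
    if h : j ≠ i₀ ∧ j ≠ i₁ then uu0 j h.1 h.2 else Classical.arbitrary V with huudef
  set vv : Fin k → V := fun j =>
    if h : j ≠ i₀ ∧ j ≠ i₁ then vv0 j h.1 h.2 else Classical.arbitrary V with hvvdef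
  have huv : ∀ j, j ∈ R → uu j ≠ vv j := by
    intro j hj
    obtain ⟨h0, h1'⟩ := (hRmem j).mp hj
    rw [huudef, hvvdef]
    simp only [dif_pos (And.intro h0 h1')]
    exact huv0 j h0 h1'
  have hupart : ∀ j, j ∈ R → univ.filter (fun x => p x = j) = {uu j, vv j} := by
    intro j hj
    obtain ⟨h0, h1'⟩ := (hRmem j).mp hj
    rw [huudef, hvvdef]
    simp only [dif_pos (And.intro h0 h1')]
    exact hupart0 j h0 h1'
  have hRcard : R.card + 2 = k := by
    rw [hR, Finset.card_sdiff_of_subset (Finset.subset_univ _), Finset.card_univ, Fintype.card_fin,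
      Finset.card_insert_of_notMem (by simp [hne]), Finset.card_singleton]
    omega
  set eR := R.equivFin with heR
  set idx : Fin R.card → Fin k := fun t => ((eR.symm t : R) : Fin k) with hidx
  have hidxR : ∀ t, idx t ∈ R := fun t => (eR.symm t).2
  have hidx_eR : ∀ (j : Fin k) (hj : j ∈ R), idx (eR ⟨j, hj⟩) = j := by
    intro j hj
    rw [hidx]
    simp
  have hidx_inj : Function.Injective idx := by
    intro t t' h
    have h1 : eR.symm t = eR.symm t' := Subtype.ext h
    have h2 := congrArg eR h1
    simpa using h2
  -- vertex p-facts
  have hps1 : p s1 = i₀ := (Finset.mem_filter.mp (hS (by rw [hSeq]; simp))).2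
  have hps2 : p s2 = i₀ := (Finset.mem_filter.mp (hS (by rw [hSeq]; simp))).2
  have hps3 : p s3 = i₀ := (Finset.mem_filter.mp (hS (by rw [hSeq]; simp))).2
  have haP : av ∈ (univ.filter fun v => p v = i₀) \ S := by rw [hPSeq]; simp
  have hbP : bv ∈ (univ.filter fun v => p v = i₀) \ S := by rw [hPSeq]; simp
  have hpa : p av = i₀ := (Finset.mem_filter.mp (Finset.mem_sdiff.mp haP).1).2
  have hpb : p bv = i₀ := (Finset.mem_filter.mp (Finset.mem_sdiff.mp hbP).1).2
  have haS : av ∉ S := (Finset.mem_sdiff.mp haP).2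
  have hbS : bv ∉ S := (Finset.mem_sdiff.mp hbP).2
  have hpw : p wv = i₁ := by
    have : wv ∈ univ.filter (fun v => p v = i₁) := by rw [hweq]; simp
    exact (Finset.mem_filter.mp this).2
  have hpu : ∀ j, j ∈ R → p (uu j) = j := by
    intro j hj
    have : uu j ∈ univ.filter (fun x => p x = j) := by
      rw [hupart j hj]; simp
    exact (Finset.mem_filter.mp this).2
  have hpv : ∀ j, j ∈ R → p (vv j) = j := by
    intro j hj
    have : vv j ∈ univ.filter (fun x => p x = j) := by
      rw [hupart j hj]; simp
    exact (Finset.mem_filter.mp this).2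
  set vtx : Fin 5 → V := ![s1, s2, s3, av, bv] with hvtx
  have hpvtx : ∀ i, p (vtx i) = i₀ := by
    intro i
    fin_cases i
    · exact hps1
    · exact hps2
    · exact hps3
    · exact hpa
    · exact hpb
  -- category decomposition
  have hcat : ∀ v : V, (∃ i : Fin 5, v = vtx i) ∨ (v = wv) ∨
      (p v ∈ R ∧ (v = uu (p v) ∨ v = vv (p v))) := by
    intro v
    by_cases h0 : p v = i₀
    · left
      have hv5 : v ∈ univ.filter fun x => p x = i₀ := Finset.mem_filter.mpr ⟨mem_univ _, h0⟩
      by_cases hvS : v ∈ S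
      · rw [hSeq] at hvS
        simp only [Finset.mem_insert, Finset.mem_singleton] at hvS
        rcases hvS with rfl | rfl | rfl
        exacts [⟨0, rfl⟩, ⟨1, rfl⟩, ⟨2, rfl⟩]
      · have : v ∈ (univ.filter fun x => p x = i₀) \ S := Finset.mem_sdiff.mpr ⟨hv5, hvS⟩
        rw [hPSeq] at this
        simp only [Finset.mem_insert, Finset.mem_singleton] at this
        rcases this with rfl | rfl
        exacts [⟨3, rfl⟩, ⟨4, rfl⟩]
    · by_cases h1' : p v = i₁
      · right; left
        have : v ∈ univ.filter fun x => p x = i₁ := Finset.mem_filter.mpr ⟨mem_univ _, h1'⟩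
        rw [hweq] at this
        simpa using this
      · right; right
        have hvR : p v ∈ R := (hRmem _).mpr ⟨h0, h1'⟩
        refine ⟨hvR, ?_⟩
        have : v ∈ univ.filter (fun x => p x = p v) := Finset.mem_filter.mpr ⟨mem_univ _, rfl⟩
        rw [hupart (p v) hvR] at this
        simpa using this
  -- apply the master lemma
  obtain ⟨x, y, ω, g, hx, hy, hω, hg, hpd, hωd, hgd, hgω⟩ :=
    master R.card (fun t => L (uu (idx t))) (fun t => L (vv (idx t))) (L wv)
      (fun i => L (vtx i)) c ({0, 1, 2} : Finset (Fin 5))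
      (fun t => by
        show R.card + 2 ≤ (L (uu (idx t))).card
        have := hL (uu (idx t)); omega)
      (fun t => by
        show R.card + 2 ≤ (L (vv (idx t))).card
        have := hL (vv (idx t)); omega)
      (by have := hL wv; omega)
      (fun i => by
        show R.card + 2 ≤ (L (vtx i)).card
        have := hL (vtx i); omega)
      (by decide)
      (by
        intro i hi
        fin_cases hi
        · exact hc s1 (by rw [hSeq]; simp)
        · exact hc s2 (by rw [hSeq]; simp)
        · exact hc s3 (by rw [hSeq]; simp))
  -- the colouring
  set fdef : V → ℕ := fun v =>
    if v = s1 then g 0 else if v = s2 then g 1 else if v = s3 then g 2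
    else if v = av then g 3 else if v = bv then g 4 else if v = wv then ω
    else if hv : p v ∈ R then
      (if v = uu (p v) then x (eR ⟨p v, hv⟩) else y (eR ⟨p v, hv⟩))
    else 0 with hfdef
  -- evaluation lemmas
  have hws : ∀ i, wv ≠ vtx i := by
    intro i h
    apply hne
    rw [← hpw, h, hpvtx i]
  have hus : ∀ j, j ∈ R → ∀ i, uu j ≠ vtx i := by
    intro j hj i h
    have := hpu j hj
    rw [h, hpvtx i] at this
    exact ((hRmem j).mp hj).1 this.symm
  have hvs : ∀ j, j ∈ R → ∀ i, vv j ≠ vtx i := by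
    intro j hj i h
    have := hpv j hj
    rw [h, hpvtx i] at this
    exact ((hRmem j).mp hj).1 this.symm
  have huw : ∀ j, j ∈ R → uu j ≠ wv := by
    intro j hj h
    have := hpu j hj
    rw [h, hpw] at this
    exact ((hRmem j).mp hj).2 this.symm
  have hvw : ∀ j, j ∈ R → vv j ≠ wv := by
    intro j hj h
    have := hpv j hj
    rw [h, hpw] at this
    exact ((hRmem j).mp hj).2 this.symm
  have has1 : av ≠ s1 := fun h => haS (by rw [h, hSeq]; simp)
  have has2 : av ≠ s2 := fun h => haS (by rw [h, hSeq]; simp)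
  have has3 : av ≠ s3 := fun h => haS (by rw [h, hSeq]; simp)
  have hbs1 : bv ≠ s1 := fun h => hbS (by rw [h, hSeq]; simp)
  have hbs2 : bv ≠ s2 := fun h => hbS (by rw [h, hSeq]; simp)
  have hbs3 : bv ≠ s3 := fun h => hbS (by rw [h, hSeq]; simp)
  have hfg : ∀ i, fdef (vtx i) = g i := by
    intro i
    fin_cases i
    · show fdef s1 = g 0
      rw [hfdef]; simp
    · show fdef s2 = g 1
      rw [hfdef]; simp [h12.symm]
    · show fdef s3 = g 2
      rw [hfdef]; simp [h13.symm, h23.symm]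
    · show fdef av = g 3
      rw [hfdef]; simp [has1, has2, has3]
    · show fdef bv = g 4
      rw [hfdef]; simp [hbs1, hbs2, hbs3, hab.symm]
  have hfw : fdef wv = ω := by
    have e0 : wv ≠ s1 := hws 0
    have e1 : wv ≠ s2 := hws 1
    have e2 : wv ≠ s3 := hws 2
    have e3 : wv ≠ av := hws 3
    have e4 : wv ≠ bv := hws 4
    rw [hfdef]
    simp only []
    rw [if_neg e0, if_neg e1, if_neg e2, if_neg e3, if_neg e4]
    simp
  have hfu : ∀ j (hj : j ∈ R), fdef (uu j) = x (eR ⟨j, hj⟩) := by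
    intro j hj
    have e0 : uu j ≠ s1 := hus j hj 0
    have e1 : uu j ≠ s2 := hus j hj 1
    have e2 : uu j ≠ s3 := hus j hj 2
    have e3 : uu j ≠ av := hus j hj 3
    have e4 : uu j ≠ bv := hus j hj 4
    rw [hfdef]
    simp only []
    rw [if_neg e0, if_neg e1, if_neg e2, if_neg e3, if_neg e4, if_neg (huw j hj)]
    have hpuj := hpu j hj
    rw [dif_pos (by rw [hpuj]; exact hj)]
    rw [if_pos (by rw [hpuj])]
    exact congrArg x (congrArg eR (Subtype.ext hpuj))
  have hfv : ∀ j (hj : j ∈ R), fdef (vv j) = y (eR ⟨j, hj⟩) := by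
    intro j hj
    have e0 : vv j ≠ s1 := hvs j hj 0
    have e1 : vv j ≠ s2 := hvs j hj 1
    have e2 : vv j ≠ s3 := hvs j hj 2
    have e3 : vv j ≠ av := hvs j hj 3
    have e4 : vv j ≠ bv := hvs j hj 4
    rw [hfdef]
    simp only []
    rw [if_neg e0, if_neg e1, if_neg e2, if_neg e3, if_neg e4, if_neg (hvw j hj)]
    have hpvj := hpv j hj
    rw [dif_pos (by rw [hpvj]; exact hj)]
    rw [if_neg (by rw [hpvj]; exact fun h => (huv j hj) h.symm)]
    exact congrArg y (congrArg eR (Subtype.ext hpvj))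
  refine ⟨fdef, ?_, ?_⟩
  · -- distinctness
    intro u v hpuv
    rcases hcat u with ⟨iu, rfl⟩ | rfl | ⟨hjR, hu⟩ <;>
      rcases hcat v with ⟨iv, rfl⟩ | rfl | ⟨hjR', hv'⟩
    · exact absurd (by rw [hpvtx iu, hpvtx iv]) hpuv
    · rw [hfg iu, hfw]; exact hgω iu
    · rcases hv' with hveq | hveq
      · rw [hfg iu]
        rw [hveq, hfu (p v) hjR']
        exact (hgd iu _).1
      · rw [hfg iu]
        rw [hveq, hfv (p v) hjR']
        exact (hgd iu _).2
    · rw [hfg iv, hfw]; exact (hgω iv).symm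
    · exact absurd rfl hpuv
    · rcases hv' with hveq | hveq
      · rw [hfw]
        rw [hveq, hfu (p v) hjR']
        exact (hωd _).1
      · rw [hfw]
        rw [hveq, hfv (p v) hjR']
        exact (hωd _).2
    · rcases hu with hueq | hueq
      · rw [hfg iv]
        rw [hueq, hfu (p u) hjR]
        exact fun h => (hgd iv _).1 h.symm
      · rw [hfg iv]
        rw [hueq, hfv (p u) hjR]
        exact fun h => (hgd iv _).2 h.symm
    · rcases hu with hueq | hueq
      · rw [hfw]
        rw [hueq, hfu (p u) hjR]
        exact fun h => (hωd _).1 h.symm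
      · rw [hfw]
        rw [hueq, hfv (p u) hjR]
        exact fun h => (hωd _).2 h.symm
    · -- both in pair parts
      have htne : eR ⟨p u, hjR⟩ ≠ eR ⟨p v, hjR'⟩ := by
        intro h
        exact hpuv (congrArg Subtype.val (eR.injective h))
      rcases hu with hueq | hueq <;> rcases hv' with hveq | hveq
      · conv_lhs => rw [hueq]
        conv_rhs => rw [hveq]
        rw [hfu (p u) hjR, hfu (p v) hjR']
        exact (hpd _ _ htne).1
      · conv_lhs => rw [hueq]
        conv_rhs => rw [hveq]
        rw [hfu (p u) hjR, hfv (p v) hjR']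
        exact (hpd _ _ htne).2.1
      · conv_lhs => rw [hueq]
        conv_rhs => rw [hveq]
        rw [hfv (p u) hjR, hfu (p v) hjR']
        exact fun h => (hpd _ _ htne.symm).2.1 h.symm
      · conv_lhs => rw [hueq]
        conv_rhs => rw [hveq]
        rw [hfv (p u) hjR, hfv (p v) hjR']
        exact (hpd _ _ htne).2.2
  · -- list membership
    intro v
    rcases hcat v with ⟨iv, rfl⟩ | rfl | ⟨hjR, hv'⟩
    · rw [hfg iv]; exact hg iv
    · rw [hfw]; exact hω
    · rcases hv' with hveq | hveq
      · rw [hveq, hfu (p v) hjR]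
        have h9 := hx (eR ⟨p v, hjR⟩)
        rwa [hidx_eR (p v) hjR] at h9
      · rw [hveq, hfv (p v) hjR]
        have h9 := hy (eR ⟨p v, hjR⟩)
        rwa [hidx_eR (p v) hjR] at h9
end

section
/- Let G be a graph with list assignment L, colour set C, and λ = |V(G)|−|C| ≥ 1. Call a colour c frequent if |L^{-1}(c)| ≥ k+2, or |L^{-1}(c) ∩ T| ≥ λ, or (|T| = λ−1 ≥ 1 and T ⊆ L^{-1}(c)), where T is the set of vertices in singleton parts. In a minimal counterexample setting (G complete k-partite, 2k+2 vertices, not L-colourable, all auxiliary lemmas available), if G has a near-acceptable L-colouring (a pseudo-L-colouring in which every badly coloured vertex receives a frequent colour), then G has a proper L-colouring. -/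
/-!
Let `A(c)` be the set of colours lying in the list of every vertex of the colour class `c`,
and let `X` be a set of colour classes of maximum deficiency `|X| - |A(X)|`. If the deficiency
is zero, Hall's theorem assigns distinct colours from `A` to the colour classes, which is a
proper `L`-colouring. Otherwise every colour `c ∈ X` lies in `A(X)`, contradicting `|A(X)| < |X|`:
this is clear for well coloured classes, and for a badly coloured vertex `v` with the frequent
colour `c` some class in `X` must see `c` in all its lists. Indeed, if `c` is in `k + 2` lists,
then at most `k` vertices miss `c`, fewer than `|X|` since `A(X) ⊇ L v` has `k` colours; and
if `c` is in the lists of many singleton parts, the colours of those parts are singleton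
classes outside `X`, more of them than the auxiliary lemma allows.
-/

open Finset

namespace ListColouring

variable {V α ι : Type*} [Fintype V] [DecidableEq α] [DecidableEq ι]
  {p : V → ι} {L : V → Finset α} {f : V → α}

def colourClass (f : V → α) (c : α) : Finset V := univ.filter fun v => f v = c

def part (p : V → ι) (v : V) : Finset V := univ.filter fun w => p w = p v

def singletonParts [DecidableEq V] (p : V → ι) : Finset V := univ.filter fun v => part p v = {v}

/-- The neighbourhood of the colour class `c` in the availability graph. -/
def avail (L : V → Finset α) (f : V → α) (c : α) : Finset α :=
  (univ.biUnion L).filter fun c' => ∀ v, f v = c → c' ∈ L v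

def deficiency (L : V → Finset α) (f : V → α) (X : Finset α) : ℕ :=
  X.card - (X.biUnion (avail L f)).card

def lonelyColours [DecidableEq V] (p : V → ι) (f : V → α) (X : Finset α) : Finset α :=
  ((univ.image f) \ X).filter fun c => ∃ v, colourClass f c = {v} ∧ part p v = {v}

def IsFrequent [DecidableEq V] (k lam : ℕ) (p : V → ι) (L : V → Finset α) (c : α) : Prop :=
  k + 2 ≤ (univ.filter fun w => c ∈ L w).card ∨
    lam ≤ ((singletonParts p).filter fun w => c ∈ L w).card ∨
    ((singletonParts p).card = lam - 1 ∧ 1 ≤ lam - 1 ∧ ∀ w ∈ singletonParts p, c ∈ L w)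

lemma eq_of_colourClass_eq_singleton {v x : V} (hv : colourClass f (f v) = {v})
    (hx : f x = f v) : x = v := by
  have hmem : x ∈ colourClass f (f v) := by simp [colourClass, hx]
  rwa [hv, mem_singleton] at hmem

lemma colourClass_eq_singleton_of_part_eq_singleton (hproper : ∀ u v, p u ≠ p v → f u ≠ f v)
    {w : V} (hw : part p w = {w}) : colourClass f (f w) = {w} := by
  refine eq_singleton_iff_unique_mem.mpr ⟨by simp [colourClass], fun x hx => ?_⟩
  by_contra hxw
  have hxp : x ∉ part p w := by simpa [hw] using hxw
  exact hproper x w (by simpa [part] using hxp) (mem_filter.mp hx).2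

lemma colourClass_eq_singleton_of_not_mem
    (hpseudo : ∀ c, 2 ≤ (colourClass f c).card → ∀ v, f v = c → c ∈ L v)
    {v : V} (hv : f v ∉ L v) : colourClass f (f v) = {v} := by
  have hsmall : (colourClass f (f v)).card ≤ 1 := by
    by_contra h
    exact hv (hpseudo _ (by omega) v rfl)
  have hmem : v ∈ colourClass f (f v) := by simp [colourClass]
  exact eq_singleton_iff_unique_mem.mpr
    ⟨hmem, fun x hx => card_le_one.mp hsmall x hx v hmem⟩

lemma subset_avail_of_colourClass_eq_singleton {v : V} (hv : colourClass f (f v) = {v}) :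
    L v ⊆ avail L f (f v) := by
  intro c hc
  refine mem_filter.mpr ⟨mem_biUnion.mpr ⟨v, mem_univ v, hc⟩, fun x hx => ?_⟩
  rwa [eq_of_colourClass_eq_singleton hv hx]

lemma mem_avail {c c₀ : α} (hc₀ : c₀ ∈ univ.image f) (h : ∀ x, f x = c₀ → c ∈ L x) :
    c ∈ avail L f c₀ := by
  obtain ⟨x, -, hx⟩ := mem_image.mp hc₀
  exact mem_filter.mpr ⟨mem_biUnion.mpr ⟨x, mem_univ x, h x hx⟩, h⟩

lemma exists_listColouring_of_hall
    (hHall : ∀ X ⊆ univ.image f, X.card ≤ (X.biUnion (avail L f)).card) :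
    ∃ g : V → α, (∀ u v, g u = g v → f u = f v) ∧ ∀ v, g v ∈ L v := by
  obtain ⟨φ, hφinj, hφ⟩ := (all_card_le_biUnion_card_iff_exists_injective
      fun c : univ.image f => avail L f c).mp fun s => by
    have h := hHall (s.image Subtype.val) (image_subset_iff.mpr fun c _ => c.2)
    rwa [card_image_of_injective _ Subtype.val_injective, image_biUnion] at h
  exact ⟨fun v => φ ⟨f v, mem_image_of_mem f (mem_univ v)⟩,
    fun u v h => congrArg Subtype.val (hφinj h), fun v => (mem_filter.mp (hφ _)).2 v rfl⟩

lemma exists_forall_mem_of_card_le {X : Finset α}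
    (hviol : (X.biUnion (avail L f)).card < X.card)
    {v : V} (hv : colourClass f (f v) = {v}) (hvX : f v ∈ X) {c : α}
    (hc : Fintype.card V ≤ (L v).card + (univ.filter fun w => c ∈ L w).card) :
    ∃ c₀ ∈ X, ∀ x, f x = c₀ → c ∈ L x := by
  by_contra! hX
  have hXsub : X ⊆ (univ.filter fun w => c ∉ L w).image f := fun c₀ hc₀ => by
    obtain ⟨x, hx, hxc⟩ := hX c₀ hc₀
    exact mem_image.mpr ⟨x, mem_filter.mpr ⟨mem_univ x, hxc⟩, hx⟩
  have hmissing := (card_le_card hXsub).trans card_image_le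
  have hsplit := card_filter_add_card_filter_not (s := univ) fun w => c ∈ L w
  have hLv : (L v).card ≤ (X.biUnion (avail L f)).card :=
    (card_le_card (subset_avail_of_colourClass_eq_singleton hv)).trans
      (card_le_card (subset_biUnion_of_mem _ hvX))
  rw [card_univ] at hsplit
  omega

lemma exists_forall_mem_of_card_lonelyColours_lt [DecidableEq V] (hproper : ∀ u v, p u ≠ p v → f u ≠ f v)
    {X : Finset α} {S : Finset V} (hS : S ⊆ singletonParts p) {c : α}
    (hSc : ∀ w ∈ S, c ∈ L w) (hlt : (lonelyColours p f X).card < S.card) :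
    ∃ c₀ ∈ X, ∀ x, f x = c₀ → c ∈ L x := by
  by_contra! hX
  have hpart : ∀ w ∈ S, part p w = {w} := fun w hw => (mem_filter.mp (hS hw)).2
  have hclass : ∀ w ∈ S, colourClass f (f w) = {w} := fun w hw =>
    colourClass_eq_singleton_of_part_eq_singleton hproper (hpart w hw)
  have hinj : Set.InjOn f S := fun a ha b _ hab =>
    (eq_of_colourClass_eq_singleton (hclass a ha) hab.symm).symm
  have hsub : S.image f ⊆ lonelyColours p f X := by
    intro _ hc
    obtain ⟨w, hw, rfl⟩ := mem_image.mp hc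
    refine mem_filter.mpr ⟨mem_sdiff.mpr ⟨mem_image_of_mem f (mem_univ w), fun hwX => ?_⟩,
      w, hclass w hw, hpart w hw⟩
    obtain ⟨x, hx, hxc⟩ := hX (f w) hwX
    exact hxc (eq_of_colourClass_eq_singleton (hclass w hw) hx ▸ hSc w hw)
  have hle := card_le_card hsub
  rw [card_image_of_injOn hinj] at hle
  omega

lemma exists_forall_mem_of_isFrequent [DecidableEq V] (hproper : ∀ u v, p u ≠ p v → f u ≠ f v)
    (hpseudo : ∀ c, 2 ≤ (colourClass f c).card → ∀ v, f v = c → c ∈ L v)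
    {k lam : ℕ} (hcard : Fintype.card V = 2 * k + 2) (hL : ∀ v, k ≤ (L v).card)
    (hlam1 : 1 ≤ lam) (hfreq : ∀ v, f v ∉ L v → IsFrequent k lam p L (f v))
    {X : Finset α} (hviol : (X.biUnion (avail L f)).card < X.card)
    (hlonely : (lonelyColours p f X).card ≤ lam - 1)
    (hlonely' : (singletonParts p).card = lam - 1 → 2 ≤ lam →
      (lonelyColours p f X).card ≤ lam - 2)
    {c : α} (hc : c ∈ X) : ∃ c₀ ∈ X, ∀ x, f x = c₀ → c ∈ L x := by
  by_cases hgood : ∀ x, f x = c → c ∈ L x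
  · exact ⟨c, hc, hgood⟩
  push Not at hgood
  obtain ⟨v, rfl, hv⟩ := hgood
  rcases hfreq v hv with hmany | hT | ⟨hT, hlam2, hTall⟩
  · exact exists_forall_mem_of_card_le hviol (colourClass_eq_singleton_of_not_mem hpseudo hv) hc
      (by have := hL v; omega)
  · exact exists_forall_mem_of_card_lonelyColours_lt hproper (filter_subset _ _)
      (fun w hw => (mem_filter.mp hw).2) (by omega)
  · have := hlonely' hT (by omega)
    exact exists_forall_mem_of_card_lonelyColours_lt hproper subset_rfl hTall (by omega)

end ListColouring

open ListColouring

theorem stmt_13_general {V : Type*} [Fintype V] [DecidableEq V]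
    (k : ℕ) (p : V → Fin k)
    (hcard : Fintype.card V = 2 * k + 2)
    (L : V → Finset ℕ) (hL : ∀ v, k ≤ (L v).card)
    (lam : ℕ) (hlam1 : 1 ≤ lam)
    -- auxiliary lemma: at most λ−1 singleton parts outside a maximum Hall violator,
    -- and at most λ−2 of them if G has exactly λ−1 ≥ 1 singleton parts and λ ≥ 2
    (haux : ∀ f' : V → ℕ, (∀ u v, p u ≠ p v → f' u ≠ f' v) →
      (∀ c : ℕ, 2 ≤ (univ.filter fun v => f' v = c).card → ∀ v, f' v = c → c ∈ L v) →
      ∀ X ⊆ univ.image f',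
        (X.biUnion fun c => (univ.biUnion L).filter
          fun c' => ∀ v, f' v = c → c' ∈ L v).card < X.card →
        (∀ X' ⊆ univ.image f',
          X'.card - (X'.biUnion fun c => (univ.biUnion L).filter
            fun c' => ∀ v, f' v = c → c' ∈ L v).card ≤
          X.card - (X.biUnion fun c => (univ.biUnion L).filter
            fun c' => ∀ v, f' v = c → c' ∈ L v).card) →
        ((((univ.image f') \ X).filter fun c =>
            ∃ v : V, (univ.filter fun w => f' w = c) = {v} ∧
              (univ.filter fun w => p w = p v) = {v}).card ≤ lam - 1 ∧
         ((univ.filter fun v : V =>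
              (univ.filter fun w => p w = p v) = {v}).card = lam - 1 → 2 ≤ lam →
            (((univ.image f') \ X).filter fun c =>
              ∃ v : V, (univ.filter fun w => f' w = c) = {v} ∧
                (univ.filter fun w => p w = p v) = {v}).card ≤ lam - 2)))
    -- a near-acceptable L-colouring
    (f : V → ℕ)
    (hproper : ∀ u v, p u ≠ p v → f u ≠ f v)
    (hpseudo : ∀ c : ℕ, 2 ≤ (univ.filter fun v => f v = c).card →
      ∀ v, f v = c → c ∈ L v)
    (hfreq : ∀ v, f v ∉ L v →
      (k + 2 ≤ (univ.filter fun w => f v ∈ L w).card ∨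
       lam ≤ ((univ.filter fun w : V =>
          (univ.filter fun u => p u = p w) = {w}).filter fun w => f v ∈ L w).card ∨
       ((univ.filter fun w : V =>
            (univ.filter fun u => p u = p w) = {w}).card = lam - 1 ∧ 1 ≤ lam - 1 ∧
          ∀ w ∈ univ.filter fun w : V =>
            (univ.filter fun u => p u = p w) = {w}, f v ∈ L w))) :
    ∃ g : V → ℕ, (∀ u v, p u ≠ p v → g u ≠ g v) ∧ ∀ v, g v ∈ L v := by
  obtain ⟨X, hXf, hXmax⟩ :=
    (univ.image f).powerset.exists_max_image (deficiency L f) ⟨∅, empty_mem_powerset _⟩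
  rw [mem_powerset] at hXf
  replace hXmax : ∀ X' ⊆ univ.image f, deficiency L f X' ≤ deficiency L f X :=
    fun X' h => hXmax X' (mem_powerset.mpr h)
  by_cases hviol : (X.biUnion (avail L f)).card < X.card
  · obtain ⟨hlonely, hlonely'⟩ := haux f hproper hpseudo X hXf hviol hXmax
    refine absurd (card_le_card fun c hc => ?_) hviol.not_ge
    obtain ⟨c₀, hc₀, hcov⟩ := exists_forall_mem_of_isFrequent hproper hpseudo hcard hL hlam1
      hfreq hviol hlonely hlonely' hc
    exact mem_biUnion.mpr ⟨c₀, hc₀, mem_avail (hXf hc₀) hcov⟩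
  · obtain ⟨g, hgf, hgL⟩ := exists_listColouring_of_hall (L := L) fun X' hX' => by
      have := hXmax X' hX'
      unfold deficiency at this
      omega
    exact ⟨g, fun u v huv hg => hproper u v huv (hgf u v hg), hgL⟩

/-- Lemma 6.1 (lem-near): in the minimum counterexample setting (`G` complete
`k`-partite on `2k+2` vertices, `k`-lists, `λ = |V| − |C| ≥ 1`), assuming the paper's
auxiliary lemmas (at most `λ−1` singleton parts outside a maximum Hall violator of the
availability graph of any pseudo-`L`-colouring, at most `λ−2` if `G` has exactly
`λ−1 ≥ 1` singleton parts and `λ ≥ 2`, and empty list intersection on every part of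
size ≥ 2), if `G` has a near-acceptable `L`-colouring (a pseudo-`L`-colouring whose
badly coloured vertices all receive frequent colours), then `G` has a proper
`L`-colouring. -/
theorem stmt_13 {V : Type*} [Fintype V] [DecidableEq V]
    (k : ℕ) (p : V → Fin k) (hsurj : Function.Surjective p)
    (hcard : Fintype.card V = 2 * k + 2)
    (L : V → Finset ℕ) (hL : ∀ v, k ≤ (L v).card)
    (lam : ℕ) (hlam : (univ.biUnion L).card + lam = 2 * k + 2) (hlam1 : 1 ≤ lam)
    -- auxiliary lemma: at most λ−1 singleton parts outside a maximum Hall violator,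
    -- and at most λ−2 of them if G has exactly λ−1 ≥ 1 singleton parts and λ ≥ 2
    (haux : ∀ f' : V → ℕ, (∀ u v, p u ≠ p v → f' u ≠ f' v) →
      (∀ c : ℕ, 2 ≤ (univ.filter fun v => f' v = c).card → ∀ v, f' v = c → c ∈ L v) →
      ∀ X ⊆ univ.image f',
        (X.biUnion fun c => (univ.biUnion L).filter
          fun c' => ∀ v, f' v = c → c' ∈ L v).card < X.card →
        (∀ X' ⊆ univ.image f',
          X'.card - (X'.biUnion fun c => (univ.biUnion L).filter
            fun c' => ∀ v, f' v = c → c' ∈ L v).card ≤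
          X.card - (X.biUnion fun c => (univ.biUnion L).filter
            fun c' => ∀ v, f' v = c → c' ∈ L v).card) →
        ((((univ.image f') \ X).filter fun c =>
            ∃ v : V, (univ.filter fun w => f' w = c) = {v} ∧
              (univ.filter fun w => p w = p v) = {v}).card ≤ lam - 1 ∧
         ((univ.filter fun v : V =>
              (univ.filter fun w => p w = p v) = {v}).card = lam - 1 → 2 ≤ lam →
            (((univ.image f') \ X).filter fun c =>
              ∃ v : V, (univ.filter fun w => f' w = c) = {v} ∧
                (univ.filter fun w => p w = p v) = {v}).card ≤ lam - 2)))
    -- auxiliary lemma: every part of size at least 2 has empty list intersection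
    (hparts : ∀ i : Fin k, 2 ≤ (univ.filter fun v => p v = i).card →
      ¬ ∃ c : ℕ, ∀ v, p v = i → c ∈ L v)
    -- a near-acceptable L-colouring
    (f : V → ℕ)
    (hproper : ∀ u v, p u ≠ p v → f u ≠ f v)
    (hpseudo : ∀ c : ℕ, 2 ≤ (univ.filter fun v => f v = c).card →
      ∀ v, f v = c → c ∈ L v)
    (hrange : ∀ v, f v ∈ univ.biUnion L)
    (hfreq : ∀ v, f v ∉ L v →
      (k + 2 ≤ (univ.filter fun w => f v ∈ L w).card ∨
       lam ≤ ((univ.filter fun w : V =>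
          (univ.filter fun u => p u = p w) = {w}).filter fun w => f v ∈ L w).card ∨
       ((univ.filter fun w : V =>
            (univ.filter fun u => p u = p w) = {w}).card = lam - 1 ∧ 1 ≤ lam - 1 ∧
          ∀ w ∈ univ.filter fun w : V =>
            (univ.filter fun u => p u = p w) = {w}, f v ∈ L w))) :
    ∃ g : V → ℕ, (∀ u v, p u ≠ p v → g u ≠ g v) ∧ ∀ v, g v ∈ L v :=
  stmt_13_general k p hcard L hL lam hlam1 haux f hproper hpseudo hfreq
end
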